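/- arXiv:2311.17896 — 7 statements merged into one kernel-verified Lean document; each statement's English description precedes it below -/
import Mathlib

section
/- Let M be an n×n matrix over K = 𝔽_{q^n}. Then: (i) for every z ∈ K the matrix D_z(M) is a Dickson matrix; (ii) M lies in the K-linear span of the set {D_z(M) : z ∈ K}; and (iii) for every 𝔽_q-subspace W of the space of Dickson matrices such that M lies in the K-linear span of W, one has D_z(M) ∈ W for every z ∈ K. (In other words, the contraction space {D_z(M) : z ∈ K} is the unique subspace of the subgeometry of Dickson points of minimal dimension whose extension contains the point determined by M.) -/
/-- The σ-twist of a matrix: `(M^[σ])_{i,j} = (M_{i-1,j-1})^q` (indices mod `n`). -/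
def sigmaTwist (q : ℕ) {n : ℕ} {K : Type*} [Field K]
    (M : Matrix (ZMod n) (ZMod n) K) : Matrix (ZMod n) (ZMod n) K :=
  Matrix.of fun i j => (M (i - 1) (j - 1)) ^ q

/-- A matrix is a Dickson matrix if it is fixed by the σ-twist. -/
def IsDickson (q : ℕ) {n : ℕ} {K : Type*} [Field K]
    (M : Matrix (ZMod n) (ZMod n) K) : Prop :=
  sigmaTwist q M = M

/-- The contraction `D_z(M) = ∑_{j<n} z^{q^j} • M^{[σ^j]}`. -/
def contractionD (q n : ℕ) {K : Type*} [Field K] (z : K)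
    (M : Matrix (ZMod n) (ZMod n) K) : Matrix (ZMod n) (ZMod n) K :=
  ∑ j ∈ Finset.range n, z ^ q ^ j • (sigmaTwist q)^[j] M

/-!
Write `q = p ^ k` with `p` the characteristic of `K`. Then `σ` is additive and `q`-semilinear, and
`σ^[n] = id` since `x ^ q ^ n = x` on `K`, so `σ` permutes the terms of `D_z(M)` cyclically: `D_z(M)`
is Dickson. The map `D_z` is additive with `D_z(c • A) = D_{zc}(A)`, and on a Dickson matrix it is
multiplication by the trace `∑ z ^ q ^ j ∈ 𝔽_q`; hence it maps the `K`-span of `W` into `W`.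
Finally, by Dedekind's independence of the characters `x ↦ x ^ q ^ j` (`j < n`) the vectors
`(z ^ q ^ j)_j` span `K^n`, and the linear map `c ↦ ∑ c_j • σ^[j] M`, which sends them to the `D_z(M)`,
sends the first unit vector to `M`.
-/

open Finset

section Contraction

variable {K : Type*} [Field K] {n : ℕ}

lemma AddMonoidHom.map_sum_range_eq_of_cyclic {M : Type*} [AddCommMonoid M] (T : M →+ M)
    (g : ℕ → M) (hT : ∀ j, T (g j) = g (j + 1)) (hg : g n = g 0) :
    T (∑ j ∈ Finset.range n, g j) = ∑ j ∈ Finset.range n, g j := by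
  rw [map_sum]
  simp_rw [hT]
  cases n with
  | zero => simp
  | succ m => rw [sum_range_succ, hg, ← sum_range_succ']

section SigmaTwist

variable (q : ℕ)

lemma sigmaTwist_smul (c : K) (A : Matrix (ZMod n) (ZMod n) K) :
    sigmaTwist q (c • A) = c ^ q • sigmaTwist q A := by
  ext i j
  simp [sigmaTwist, mul_pow]

lemma sigmaTwist_iterate_apply (j : ℕ) (A : Matrix (ZMod n) (ZMod n) K) (i i' : ZMod n) :
    (sigmaTwist q)^[j] A i i' = A (i - j) (i' - j) ^ q ^ j := by
  induction j generalizing i i' with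
  | zero => simp
  | succ j ih =>
    rw [Function.iterate_succ_apply']
    change ((sigmaTwist q)^[j] A (i - 1) (i' - 1)) ^ q = _
    rw [ih, ← pow_mul, ← pow_succ]
    congr 2 <;> push_cast <;> ring

lemma sigmaTwist_iterate_smul (j : ℕ) (c : K) (A : Matrix (ZMod n) (ZMod n) K) :
    (sigmaTwist q)^[j] (c • A) = c ^ q ^ j • (sigmaTwist q)^[j] A := by
  ext i i'
  simp [sigmaTwist_iterate_apply, mul_pow]

lemma sigmaTwist_iterate_self (hK : ∀ x : K, x ^ q ^ n = x) (A : Matrix (ZMod n) (ZMod n) K) :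
    (sigmaTwist q)^[n] A = A := by
  ext i i'
  rw [sigmaTwist_iterate_apply, ZMod.natCast_self, sub_zero, sub_zero, hK]

lemma IsDickson.iterate_eq {q : ℕ} {A : Matrix (ZMod n) (ZMod n) K} (hA : IsDickson q A)
    (j : ℕ) : (sigmaTwist q)^[j] A = A :=
  Function.iterate_fixed hA j

lemma IsDickson.contractionD_eq {q : ℕ} {A : Matrix (ZMod n) (ZMod n) K} (hA : IsDickson q A)
    (z : K) : contractionD q n z A = (∑ j ∈ range n, z ^ q ^ j) • A := by
  simp_rw [contractionD, hA.iterate_eq, sum_smul]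

lemma contractionD_smul (z c : K) (A : Matrix (ZMod n) (ZMod n) K) :
    contractionD q n z (c • A) = contractionD q n (z * c) A := by
  simp_rw [contractionD, sigmaTwist_iterate_smul, smul_smul, mul_pow]

end SigmaTwist

section ExpChar

variable (p k : ℕ) [ExpChar K p]

def sigmaTwistAddMonoidHom : Matrix (ZMod n) (ZMod n) K →+ Matrix (ZMod n) (ZMod n) K where
  toFun := sigmaTwist (p ^ k)
  map_zero' := by
    ext
    simp [sigmaTwist, expChar_ne_zero K p]
  map_add' A B := by
    ext
    simp [sigmaTwist, add_pow_expChar_pow]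

lemma contractionD_add (z : K) (A B : Matrix (ZMod n) (ZMod n) K) :
    contractionD (p ^ k) n z (A + B) = contractionD (p ^ k) n z A + contractionD (p ^ k) n z B := by
  simp_rw [contractionD, ← sum_add_distrib, ← smul_add]
  exact sum_congr rfl fun j _ => congrArg _ (iterate_map_add (sigmaTwistAddMonoidHom p k) j A B)

lemma contractionD_zero (z : K) :
    contractionD (p ^ k) n z (0 : Matrix (ZMod n) (ZMod n) K) = 0 := by
  simpa using contractionD_add p k z (0 : Matrix (ZMod n) (ZMod n) K) 0

variable {p k}

lemma contractionD_isDickson (hK : ∀ x : K, x ^ (p ^ k) ^ n = x) (z : K)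
    (M : Matrix (ZMod n) (ZMod n) K) : IsDickson (p ^ k) (contractionD (p ^ k) n z M) := by
  refine (sigmaTwistAddMonoidHom p k).map_sum_range_eq_of_cyclic
    (fun j => z ^ (p ^ k) ^ j • (sigmaTwist (p ^ k))^[j] M) (fun j => ?_) ?_
  · change sigmaTwist _ _ = _
    rw [sigmaTwist_smul, ← pow_mul, ← pow_succ, Function.iterate_succ_apply']
  · simp only [hK, sigmaTwist_iterate_self _ hK, pow_zero, pow_one, Function.iterate_zero, id_eq]

lemma sum_range_pow_pow_pow_eq_self (hK : ∀ x : K, x ^ (p ^ k) ^ n = x) (z : K) :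
    (∑ j ∈ range n, z ^ (p ^ k) ^ j) ^ p ^ k = ∑ j ∈ range n, z ^ (p ^ k) ^ j :=
  (iterateFrobenius K p k).toAddMonoidHom.map_sum_range_eq_of_cyclic _
    (fun j => by
      change (z ^ (p ^ k) ^ j) ^ p ^ k = _
      rw [← pow_mul, ← pow_succ])
    (by simp [hK])

end ExpChar

lemma contractionD_mem_of_mem_span {p k : ℕ} [ExpChar K p] (hK : ∀ x : K, x ^ (p ^ k) ^ n = x)
    {W : Set (Matrix (ZMod n) (ZMod n) K)} (hW : ∀ A ∈ W, IsDickson (p ^ k) A)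
    (hW0 : (0 : Matrix (ZMod n) (ZMod n) K) ∈ W) (hWadd : ∀ A ∈ W, ∀ B ∈ W, A + B ∈ W)
    (hWsmul : ∀ c : K, c ^ p ^ k = c → ∀ A ∈ W, c • A ∈ W)
    {A : Matrix (ZMod n) (ZMod n) K} (hA : A ∈ Submodule.span K W) (z : K) :
    contractionD (p ^ k) n z A ∈ W := by
  induction hA using Submodule.span_induction generalizing z with
  | mem A hAW =>
    rw [(hW A hAW).contractionD_eq]
    exact hWsmul _ (sum_range_pow_pow_pow_eq_self hK z) A hAW
  | zero => simpa only [contractionD_zero] using hW0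
  | add A B _ _ hA hB =>
    rw [contractionD_add]
    exact hWadd _ (hA z) _ (hB z)
  | smul c A _ hA =>
    rw [contractionD_smul]
    exact hA (z * c)

lemma FiniteField.eq_of_forall_pow_eq_pow [Fintype K] {a b : ℕ} (ha : a < Fintype.card K)
    (hb : b < Fintype.card K) (h : ∀ x : K, x ^ a = x ^ b) : a = b := by
  wlog hab : a < b generalizing a b
  · rcases (not_lt.mp hab).lt_or_eq with hba | rfl
    · exact (this hb ha (fun x => (h x).symm) hba).symm
    · rfl
  have hP : (Polynomial.X ^ b - Polynomial.X ^ a : Polynomial K) = 0 :=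
    Polynomial.eq_zero_of_natDegree_lt_card_of_eval_eq_zero _ Function.injective_id
      (fun x => by simp [h x]) ((Polynomial.natDegree_sub_le _ _).trans_lt (by simp [ha, hb]))
  simpa [Polynomial.coeff_X_pow, hab.ne'] using congrArg (Polynomial.coeff · b) hP

lemma linearIndependent_pow_pow [Fintype K] {q : ℕ} (hq : 1 < q) (hK : Fintype.card K = q ^ n) :
    LinearIndependent K (fun j : Fin n => fun x : K => x ^ q ^ (j : ℕ)) := by
  refine (linearIndependent_monoidHom K K).comp (fun j : Fin n => powMonoidHom (q ^ (j : ℕ)))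
    fun i j hij => Fin.ext (Nat.pow_right_injective hq ?_)
  have hlt (j : Fin n) : q ^ (j : ℕ) < Fintype.card K := hK ▸ Nat.pow_lt_pow_right hq j.isLt
  exact FiniteField.eq_of_forall_pow_eq_pow (hlt i) (hlt j) (DFunLike.congr_fun hij)

lemma span_range_eval_eq_top_of_linearIndependent {ι X : Type*} [Fintype ι] {f : ι → X → K}
    (hf : LinearIndependent K f) : Submodule.span K (Set.range fun x i => f i x) = ⊤ := by
  classical
  rw [← Submodule.dualAnnihilator_eq_bot_iff, eq_bot_iff]
  intro φ hφ
  rw [Submodule.mem_dualAnnihilator] at hφ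
  have hcoeff : ∀ i, φ (fun j => if i = j then 1 else 0) = 0 := by
    refine Fintype.linearIndependent_iff.mp hf _ (funext fun x => ?_)
    have := hφ _ (Submodule.subset_span ⟨x, rfl⟩)
    rw [LinearMap.pi_apply_eq_sum_univ] at this
    simpa [mul_comm] using this
  exact LinearMap.ext fun v => by simp [LinearMap.pi_apply_eq_sum_univ φ v, hcoeff]

lemma contractionD_eq_linearCombination (q : ℕ) (z : K) (M : Matrix (ZMod n) (ZMod n) K) :
    contractionD q n z M = Fintype.linearCombination K (fun j : Fin n => (sigmaTwist q)^[j] M)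
      (fun j => z ^ q ^ (j : ℕ)) := by
  rw [contractionD, Fintype.linearCombination_apply, ← Fin.sum_univ_eq_sum_range]

lemma mem_span_contractionD [NeZero n] [Fintype K] {q : ℕ} (hq : 1 < q)
    (hK : Fintype.card K = q ^ n) (M : Matrix (ZMod n) (ZMod n) K) :
    M ∈ Submodule.span K {A | ∃ z : K, A = contractionD q n z M} := by
  classical
  set S := Fintype.linearCombination K (fun j : Fin n => (sigmaTwist q)^[j] M)
  have hM : M = S (Pi.single 0 1) := by simp [S]
  have hspan := span_range_eval_eq_top_of_linearIndependent (linearIndependent_pow_pow hq hK)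
  have hmem : S (Pi.single 0 1) ∈ (Submodule.span K _).map S :=
    Submodule.mem_map_of_mem (hspan ▸ Submodule.mem_top)
  rw [Submodule.map_span, ← Set.range_comp, ← hM] at hmem
  refine Submodule.span_mono ?_ hmem
  rintro _ ⟨z, rfl⟩
  exact ⟨z, (contractionD_eq_linearCombination q z M).symm⟩

end Contraction

/-- The contraction space `{D_z(M) : z ∈ K}` of `M` consists of Dickson matrices,
its `K`-linear span contains `M`, and it is contained in every `𝔽_q`-subspace `W`
of the space of Dickson matrices whose `K`-linear span contains `M`. -/
theorem stmt0 (q n : ℕ) [NeZero n]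
    (hq : ∃ p k : ℕ, p.Prime ∧ 0 < k ∧ q = p ^ k)
    (K : Type*) [Field K] [Fintype K] (hK : Fintype.card K = q ^ n)
    (M : Matrix (ZMod n) (ZMod n) K) :
    (∀ z : K, IsDickson q (contractionD q n z M)) ∧
    M ∈ Submodule.span K {A | ∃ z : K, A = contractionD q n z M} ∧
    (∀ W : Set (Matrix (ZMod n) (ZMod n) K),
      (∀ A ∈ W, IsDickson q A) →
      (0 : Matrix (ZMod n) (ZMod n) K) ∈ W →
      (∀ A ∈ W, ∀ B ∈ W, A + B ∈ W) →
      (∀ c : K, c ^ q = c → ∀ A ∈ W, c • A ∈ W) →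
      M ∈ Submodule.span K W →
      ∀ z : K, contractionD q n z M ∈ W) := by
  obtain ⟨p, k, hp, hk, rfl⟩ := hq
  have : Fact p.Prime := ⟨hp⟩
  have : CharP K p := charP_of_card_eq_prime_pow (f := k * n) (by rw [hK, pow_mul])
  have hpow (x : K) : x ^ (p ^ k) ^ n = x := hK ▸ FiniteField.pow_card x
  exact ⟨fun z => contractionD_isDickson hpow z M,
    mem_span_contractionD (Nat.one_lt_pow hk.ne' hp.one_lt) hK M,
    fun W hW hW0 hWadd hWsmul hM => contractionD_mem_of_mem_span hpow hW hW0 hWadd hWsmul hM⟩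
end

section
/- Let M be an n×n matrix over K = 𝔽_{q^n} such that the matrices M^{[σ⁰]}, M^{[σ¹]}, …, M^{[σ^{n−1}]} are linearly independent over K. Then for every nonzero tuple c = (c₀,…,c_{n−1}) ∈ Kⁿ, the 𝔽_q-linear map x ↦ Σ_{i=0}^{n−1} cᵢ x^{qⁱ} is a bijection of K if and only if there do NOT exist z₁,…,z_{n−1} ∈ K such that Σ_{i=0}^{n−1} cᵢ · M^{[σⁱ]} lies in the K-linear span of {D_{z₁}(M), …, D_{z_{n−1}}(M)}. -/
/-!
Let `F ⊆ K` be the subfield with `q` elements. Then `L_c : x ↦ ∑ cᵢ x^{qⁱ}` is an `F`-linear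
endomorphism of the `n`-dimensional `F`-space `K`, and by nondegeneracy of the trace form every
`F`-linear functional on `K` is `x ↦ Tr(z x)`. Hence `L_c` fails to be injective iff it is a sum
of `n - 1` maps of rank one, `x ↦ ∑ⱼ wⱼ Tr(zⱼ x) = ∑ᵢ (∑ⱼ wⱼ zⱼ^{qⁱ}) x^{qⁱ}`. A
`q`-polynomial of `q`-degree `< n` is determined by its values on `K`, so this says
`cᵢ = ∑ⱼ wⱼ zⱼ^{qⁱ}`; by the linear independence of the `M^{[σⁱ]}` that is exactly
`∑ cᵢ M^{[σⁱ]} = ∑ⱼ wⱼ D_{zⱼ}(M)`.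
-/

open Module Polynomial

theorem LinearMap.not_injective_iff_exists_sum_smul {F V W : Type*} [Field F] [AddCommGroup V]
    [Module F V] [FiniteDimensional F V] [Nontrivial V] [AddCommGroup W] [Module F W]
    (L : V →ₗ[F] W) :
    ¬ Function.Injective L ↔ ∃ (f : Fin (finrank F V - 1) → Dual F V)
      (w : Fin (finrank F V - 1) → W), ∀ x, L x = ∑ j, f j x • w j := by
  constructor
  · intro hL
    obtain ⟨x₀, hx₀L, hx₀⟩ := Submodule.ne_bot_iff _ |>.mp (mt LinearMap.ker_eq_bot.mp hL)
    set P := F ∙ x₀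
    have hP : P ≤ LinearMap.ker L := (Submodule.span_singleton_le_iff_mem _ _).mpr hx₀L
    have hQ : finrank F (V ⧸ P) = finrank F (Fin (finrank F V - 1) → F) := by
      have := P.finrank_quotient_add_finrank
      rw [finrank_span_singleton hx₀] at this
      rw [finrank_fin_fun]
      omega
    let e := LinearEquiv.ofFinrankEq _ _ hQ
    refine ⟨fun j => LinearMap.proj j ∘ₗ e.toLinearMap ∘ₗ P.mkQ,
      fun j => P.liftQ L hP (e.symm (Pi.single j 1)), fun x => ?_⟩
    have := LinearMap.pi_apply_eq_sum_univ (P.liftQ L hP ∘ₗ e.symm.toLinearMap) (e (P.mkQ x))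
    simpa [← Pi.single_apply, Pi.single_comm] using this
  · rintro ⟨f, w, hLfw⟩ hL
    have hker : LinearMap.ker (LinearMap.pi f) ≠ ⊥ :=
      LinearMap.ker_ne_bot_of_finrank_lt (by
        rw [finrank_fin_fun]; have := finrank_pos (R := F) (M := V); omega)
    obtain ⟨x, hx, hx0⟩ := Submodule.ne_bot_iff _ |>.mp hker
    refine hx0 (hL ?_)
    have hfx : ∀ j, f j x = 0 := congrFun (LinearMap.mem_ker.mp hx)
    simp [hLfw, hfx]

theorem linearized_coeffs_eq_of_forall_eq {K : Type*} [Field K] [Fintype K] {q n : ℕ} (hq : 1 < q)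
    (hK : q ^ (n - 1) < Fintype.card K) {a b : Fin n → K}
    (h : ∀ x : K, ∑ i, a i * x ^ q ^ (i : ℕ) = ∑ i, b i * x ^ q ^ (i : ℕ)) : a = b := by
  let P : (Fin n → K) → K[X] := fun a => ∑ i, C (a i) * X ^ q ^ (i : ℕ)
  have hdeg : ∀ a, (P a).natDegree ≤ q ^ (n - 1) := fun a =>
    natDegree_sum_le_of_forall_le _ _ fun i _ =>
      (natDegree_C_mul_X_pow_le _ _).trans (Nat.pow_le_pow_right hq.le (by omega))
  have hcoeff : ∀ a (i : Fin n), (P a).coeff (q ^ (i : ℕ)) = a i := by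
    intro a i
    simp [P, finsetSum_coeff, coeff_X_pow, (Nat.pow_right_injective hq).eq_iff, Fin.val_inj]
  have hPab : P a = P b := eq_of_natDegree_lt_card_of_eval_eq _ _ Function.injective_id
      (fun x => by simpa [P, eval_finsetSum] using h x) ((max_le (hdeg a) (hdeg b)).trans_lt hK)
  funext i
  rw [← hcoeff a i, hPab, hcoeff]

theorem FiniteField.exists_subfield_natCard_finrank {K : Type*} [Field K] [Fintype K]
    {p k n : ℕ} (hp : p.Prime) (hk : k ≠ 0) (hK : Fintype.card K = (p ^ k) ^ n) :
    ∃ F : Subfield K, Nat.card F = p ^ k ∧ finrank F K = n := by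
  have := Fact.mk hp
  rw [← pow_mul] at hK
  have := charP_of_card_eq_prime_pow hK
  let := ZMod.algebra K p
  have hKp : finrank (ZMod p) K = k * n :=
    Nat.pow_right_injective hp.two_le ((FiniteField.pow_finrank_eq_card p K).trans hK)
  obtain ⟨φ⟩ := FiniteField.nonempty_algHom_of_finrank_dvd (K := GaloisField p k) (L := K)
    (by rw [GaloisField.finrank p hk, hKp]; exact dvd_mul_right k n)
  let F := (φ : GaloisField p k →+* K).fieldRange
  have hF : Nat.card F = p ^ k := by
    rw [← GaloisField.card p k hk, ← Nat.card_range_of_injective φ.injective]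
    exact Nat.card_congr (Equiv.setCongr (RingHom.coe_fieldRange _))
  refine ⟨F, hF, Nat.pow_right_injective (Nat.one_lt_pow hk hp.one_lt) ?_⟩
  dsimp only
  rw [← hF, ← Module.natCard_eq_pow_finrank, Nat.card_eq_fintype_card, hK, pow_mul, hF]

section LinearizedMap

variable (F : Type*) {K : Type*} [Field F] [Fintype F] [Field K] [Fintype K] [Algebra F K]

noncomputable def linearizedMap {n : ℕ} (c : Fin n → K) : K →ₗ[F] K :=
  ∑ i, LinearMap.mulLeft F (c i) ∘ₗ
    (FiniteField.frobeniusAlgEquivOfAlgebraic F K ^ (i : ℕ)).toLinearMap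

theorem coe_linearizedMap {n : ℕ} (c : Fin n → K) :
    ⇑(linearizedMap F c) = fun x => ∑ i, c i * x ^ Fintype.card F ^ (i : ℕ) := by
  ext x
  simp [linearizedMap, AlgEquiv.coe_pow, FiniteField.coe_frobeniusAlgEquivOfAlgebraic_iterate]

theorem algebraMap_trace_eq_sum_fin (y : K) :
    algebraMap F K (Algebra.trace F K y) =
      ∑ i : Fin (finrank F K), y ^ Fintype.card F ^ (i : ℕ) := by
  rw [FiniteField.algebraMap_trace_eq_sum_pow, Fin.sum_univ_eq_sum_range (fun i => y ^ _ ^ i),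
    Nat.card_eq_fintype_card]

theorem sum_trace_mul_smul_eq_linearized {m : ℕ} (z w : Fin m → K) (x : K) :
    ∑ j, Algebra.trace F K (z j * x) • w j =
      ∑ i : Fin (finrank F K), (∑ j, w j * z j ^ Fintype.card F ^ (i : ℕ)) *
        x ^ Fintype.card F ^ (i : ℕ) := by
  simp only [Algebra.smul_def, algebraMap_trace_eq_sum_fin, Finset.sum_mul, mul_pow]
  rw [Finset.sum_comm]
  refine Finset.sum_congr rfl fun i _ => Finset.sum_congr rfl fun j _ => by ring

variable {F} in
theorem not_injective_linearized_iff {q n : ℕ} (hq : Fintype.card F = q) (hn : finrank F K = n)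
    (c : Fin n → K) :
    ¬ Function.Injective (fun x : K => ∑ i, c i * x ^ q ^ (i : ℕ)) ↔
      ∃ z w : Fin (n - 1) → K, ∀ i, c i = ∑ j, w j * z j ^ q ^ (i : ℕ) := by
  subst hq hn
  have hcard : Fintype.card F ^ (finrank F K - 1) < Fintype.card K := by
    rw [Module.card_eq_pow_finrank (K := F) (V := K)]
    have := finrank_pos (R := F) (M := K)
    exact Nat.pow_lt_pow_right Fintype.one_lt_card (by omega)
  let e := (Algebra.traceForm F K).toDual (traceForm_nondegenerate F K)
  have he : ∀ z x, e z x = Algebra.trace F K (z * x) := fun z x => rfl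
  rw [← coe_linearizedMap, (linearizedMap F c).not_injective_iff_exists_sum_smul]
  constructor
  · rintro ⟨f, w, hfw⟩
    refine ⟨fun j => e.symm (f j), w,
      congrFun (linearized_coeffs_eq_of_forall_eq Fintype.one_lt_card hcard fun x => ?_)⟩
    rw [← sum_trace_mul_smul_eq_linearized, ← congrFun (coe_linearizedMap F c) x, hfw]
    simp [← he]
  · rintro ⟨z, w, hc⟩
    refine ⟨fun j => e (z j), w, fun x => ?_⟩
    simp_rw [coe_linearizedMap, he, sum_trace_mul_smul_eq_linearized, ← hc]

end LinearizedMap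

theorem LinearIndependent.sum_smul_mem_span_range_iff {R V ι κ : Type*} [Semiring R]
    [AddCommMonoid V] [Module R V] [Fintype ι] [Fintype κ] {v : ι → V}
    (hv : LinearIndependent R v) (g : κ → ι → R) (c : ι → R) :
    ∑ i, c i • v i ∈ Submodule.span R (Set.range fun j => ∑ i, g j i • v i) ↔
      ∃ w : κ → R, ∀ i, c i = ∑ j, w j * g j i := by
  have hsum : ∀ w : κ → R, ∑ j, w j • ∑ i, g j i • v i = ∑ i, (∑ j, w j * g j i) • v i := by
    intro w
    simp only [Finset.smul_sum, smul_smul, Finset.sum_smul]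
    exact Finset.sum_comm
  simp_rw [Submodule.mem_span_range_iff_exists_fun, hsum]
  refine exists_congr fun w => ⟨fun h => ?_, fun h => by simp_rw [← h]⟩
  exact fun i => (Fintype.linearIndependent_iffₛ.mp hv _ _ h i).symm

theorem contractionD_eq_sum_fin (q n : ℕ) {K : Type*} [Field K] (z : K)
    (M : Matrix (ZMod n) (ZMod n) K) :
    contractionD q n z M = ∑ i : Fin n, z ^ q ^ (i : ℕ) • (sigmaTwist q)^[(i : ℕ)] M :=
  (Fin.sum_univ_eq_sum_range (fun i => z ^ q ^ i • (sigmaTwist q)^[i] M) n).symm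

theorem stmt2_general (q n : ℕ)
    (hq : ∃ p k : ℕ, p.Prime ∧ 0 < k ∧ q = p ^ k)
    (K : Type*) [Field K] [Fintype K] (hK : Fintype.card K = q ^ n)
    (M : Matrix (ZMod n) (ZMod n) K)
    (hind : LinearIndependent K fun i : Fin n => (sigmaTwist q)^[(i : ℕ)] M)
    (c : Fin n → K) :
    Function.Bijective (fun x : K => ∑ i : Fin n, c i * x ^ q ^ (i : ℕ)) ↔
      ¬∃ z : Fin (n - 1) → K,
        (∑ i : Fin n, c i • (sigmaTwist q)^[(i : ℕ)] M) ∈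
          Submodule.span K (Set.range fun j : Fin (n - 1) => contractionD q n (z j) M) := by
  obtain ⟨p, k, hp, hk, rfl⟩ := hq
  obtain ⟨F, hFq, hn⟩ := FiniteField.exists_subfield_natCard_finrank hp hk.ne' hK
  have := Fintype.ofFinite F
  rw [Nat.card_eq_fintype_card] at hFq
  simp_rw [contractionD_eq_sum_fin, hind.sum_smul_mem_span_range_iff]
  rw [← Finite.injective_iff_bijective, ← not_iff_not, not_not,
    not_injective_linearized_iff hFq hn]

/-- If `M^{[σ⁰]}, …, M^{[σ^{n-1}]}` are `K`-linearly independent, then for a nonzero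
tuple `c` the linearised polynomial `∑ cᵢ x^{qⁱ}` is bijective iff `∑ cᵢ • M^{[σⁱ]}` does
not lie in the `K`-span of `n-1` contractions `D_{z₁}(M), …, D_{z_{n-1}}(M)`. -/
theorem stmt2 (q n : ℕ) [NeZero n]
    (hq : ∃ p k : ℕ, p.Prime ∧ 0 < k ∧ q = p ^ k)
    (K : Type*) [Field K] [Fintype K] (hK : Fintype.card K = q ^ n)
    (M : Matrix (ZMod n) (ZMod n) K)
    (hind : LinearIndependent K fun i : Fin n => (sigmaTwist q)^[(i : ℕ)] M)
    (c : Fin n → K) (hc : c ≠ 0) :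
    Function.Bijective (fun x : K => ∑ i : Fin n, c i * x ^ q ^ (i : ℕ)) ↔
      ¬∃ z : Fin (n - 1) → K,
        (∑ i : Fin n, c i • (sigmaTwist q)^[(i : ℕ)] M) ∈
          Submodule.span K (Set.range fun j : Fin (n - 1) => contractionD q n (z j) M) :=
  stmt2_general q n hq K hK M hind c
end

section
/- Let v = (α,β,γ,δ) ∈ F⁴. Then v is nonsingular if and only if there is no z ∈ F with z^{q+1} = 1 and Q(v) + H(v)·z + Q(v)^q·z² = 0. -/
/-- `Q(α,β,γ,δ) = αδ - βγ`, the quadratic form of the hyperbolic quadric. -/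
def Qf {F : Type*} [Field F] (v : Fin 4 → F) : F := v 0 * v 3 - v 1 * v 2

/-- `H(α,β,γ,δ) = α^{q+1} - β^{q+1} - γ^{q+1} + δ^{q+1}`, the Hermitian form. -/
def Hf (q : ℕ) {F : Type*} [Field F] (v : Fin 4 → F) : F :=
  v 0 ^ (q + 1) - v 1 ^ (q + 1) - v 2 ^ (q + 1) + v 3 ^ (q + 1)

/-- `v = (α,β,γ,δ)` is nonsingular if `(αz + δ^q z^q)x + (γz + β^q z^q)x^q ≠ 0`
for all nonzero `x, z`. -/
def Nonsingular (q : ℕ) {F : Type*} [Field F] (v : Fin 4 → F) : Prop :=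
  ∀ x z : F, x ≠ 0 → z ≠ 0 →
    (v 0 * z + v 3 ^ q * z ^ q) * x + (v 2 * z + v 1 ^ q * z ^ q) * x ^ q ≠ 0

/-- `Δ(v) = H(v)² - 4·Q(v)^{q+1}`. -/
def Deltaf (q : ℕ) {F : Type*} [Field F] (v : Fin 4 → F) : F :=
  Hf q v ^ 2 - 4 * Qf v ^ (q + 1)

/-- A Σ-vector: a nonzero vector of the form `(α, β, β^q, α^q)`. -/
def IsSigmaVec (q : ℕ) {F : Type*} [Field F] (v : Fin 4 → F) : Prop :=
  v ≠ 0 ∧ ∃ α β : F, v = ![α, β, β ^ q, α ^ q]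

/-- The sesquilinear form `h(u,v) = u₁v₁^q - u₂v₂^q - u₃v₃^q + u₄v₄^q`. -/
def hForm (q : ℕ) {F : Type*} [Field F] (u v : Fin 4 → F) : F :=
  u 0 * v 0 ^ q - u 1 * v 1 ^ q - u 2 * v 2 ^ q + u 3 * v 3 ^ q

/-- The one-dimensional `F`-subspace (as a set) spanned by `v`. -/
def Fline {F : Type*} [Field F] (v : Fin 4 → F) : Set (Fin 4 → F) :=
  {x | ∃ a : F, x = a • v}

/-- The number of one-dimensional `𝔽_q`-subspaces `⟨(s,t)⟩` of `𝔽_q²` with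
`Q(s·u + t·w) = 0`. -/
noncomputable def tangentCount (q : ℕ) {F : Type*} [Field F] (u w : Fin 4 → F) : ℕ :=
  Set.ncard {L : Set (F × F) | ∃ s t : F, s ^ q = s ∧ t ^ q = t ∧ (s, t) ≠ (0, 0) ∧
    Qf (fun i => s * u i + t * w i) = 0 ∧
    L = {p : F × F | ∃ e : F, e ^ q = e ∧ p = (e * s, e * t)}}

/-- `Z₁`: the set of `ξ ∉ {0, 1, -1}` such that `1 - ξ⁻²` is a nonzero square of `𝔽_q`. -/
def Zone (q : ℕ) (F : Type*) [Field F] : Set F :=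
  {ξ | ξ ≠ 0 ∧ ξ ≠ 1 ∧ ξ ≠ -1 ∧ ∃ s : F, s ^ q = s ∧ s ≠ 0 ∧ 1 - (ξ ^ 2)⁻¹ = s ^ 2}

/-- `Z₂`: the set of `ξ ≠ 0` such that `1 - ξ⁻²` is a nonzero nonsquare of `𝔽_q`. -/
def Ztwo (q : ℕ) (F : Type*) [Field F] : Set F :=
  {ξ | ξ ≠ 0 ∧ (1 - (ξ ^ 2)⁻¹) ^ q = 1 - (ξ ^ 2)⁻¹ ∧ 1 - (ξ ^ 2)⁻¹ ≠ 0 ∧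
    ¬∃ s : F, s ^ q = s ∧ 1 - (ξ ^ 2)⁻¹ = s ^ 2}

private lemma pow_sub_one_surj {F : Type*} [Field F] [Fintype F] (q : ℕ) (hq2 : 2 ≤ q)
    (hF : Fintype.card F = q ^ 2) (w : F) (hw : w ^ (q + 1) = 1) :
    ∃ x : F, x ≠ 0 ∧ x ^ (q - 1) = w := by
  classical
  have hw0 : w ≠ 0 := by
    intro h
    rw [h, zero_pow (by omega : q + 1 ≠ 0)] at hw
    exact one_ne_zero hw.symm
  obtain ⟨g, hg⟩ := IsCyclic.exists_generator (α := Fˣ)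
  have horder : orderOf g = q ^ 2 - 1 := by
    rw [orderOf_eq_card_of_forall_mem_zpowers hg, Nat.card_eq_fintype_card,
      Fintype.card_units, hF]
  set u : Fˣ := Units.mk0 w hw0 with hu
  obtain ⟨n, hn'⟩ := hg u
  have hn : g ^ n = u := hn'
  have hu1 : u ^ (q + 1) = 1 := by
    ext
    push_cast [hu]
    exact hw
  have hdvd : ((q ^ 2 - 1 : ℕ) : ℤ) ∣ n * (q + 1) := by
    rw [← horder, orderOf_dvd_iff_zpow_eq_one]
    have : g ^ (n * ((q : ℤ) + 1)) = (g ^ n) ^ ((q : ℤ) + 1) := by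
      rw [← zpow_mul]
    rw [show n * ((q:ℤ) + 1) = n * ((q:ℤ)+1) from rfl, this, hn]
    have : u ^ (((q:ℕ) + 1 : ℕ) : ℤ) = 1 := by rw [zpow_natCast, hu1]
    simpa using this
  have hcast : ((q ^ 2 - 1 : ℕ) : ℤ) = ((q:ℤ) - 1) * ((q:ℤ) + 1) := by
    have h1 : (1:ℕ) ≤ q ^ 2 := by nlinarith
    push_cast [Nat.cast_sub h1]
    ring
  rw [hcast] at hdvd
  have hdvd2 : ((q:ℤ) - 1) ∣ n := by
    have hne : ((q:ℤ) + 1) ≠ 0 := by positivity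
    have := (mul_dvd_mul_iff_right hne).mp (by rwa [] : ((q:ℤ) - 1) * ((q:ℤ)+1) ∣ n * ((q:ℤ)+1))
    exact this
  obtain ⟨m, hm⟩ := hdvd2
  refine ⟨((g ^ m : Fˣ) : F), Units.ne_zero _, ?_⟩
  have h1 : (g ^ m) ^ (q - 1) = u := by
    have hc : ((q - 1 : ℕ) : ℤ) = (q : ℤ) - 1 := by
      push_cast [Nat.cast_sub (by omega : 1 ≤ q)]
      ring
    rw [← zpow_natCast (g ^ m) (q - 1), ← zpow_mul, hc, ← hn]
    congr 1
    rw [hm]; ring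
  rw [← Units.val_pow_eq_pow_val, h1, hu]
  rfl

/-- `v` is nonsingular iff there is no `z` with `z^{q+1} = 1` and
`Q(v) + H(v)z + Q(v)^q z² = 0`. -/
theorem stmt4 (q : ℕ) (hq : ∃ p k : ℕ, p.Prime ∧ 0 < k ∧ q = p ^ k) (hodd : Odd q)
    (F : Type*) [Field F] [Fintype F] (hF : Fintype.card F = q ^ 2)
    (v : Fin 4 → F) :
    Nonsingular q v ↔
      ¬∃ z : F, z ^ (q + 1) = 1 ∧ Qf v + Hf q v * z + Qf v ^ q * z ^ 2 = 0 := by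
  obtain ⟨p, k, hp, hk, hqpk⟩ := hq
  haveI : Fact p.Prime := ⟨hp⟩
  have hq2 : 2 ≤ q := by
    rw [hqpk]
    exact Nat.one_lt_pow (by omega) hp.one_lt
  -- characteristic
  have hring := ringChar.charP F
  obtain ⟨n, hcp, hcard⟩ := FiniteField.card F (ringChar F)
  have hpc : p = ringChar F := by
    have hdvd : p ∣ ringChar F ^ (n : ℕ) := by
      rw [← hcard, hF, hqpk, ← pow_mul]
      exact dvd_pow_self p (by positivity)
    exact (Nat.prime_dvd_prime_iff_eq hp hcp).mp (hp.dvd_of_dvd_pow hdvd)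
  haveI : CharP F p := hpc ▸ hring
  have hfrobadd : ∀ a b : F, (a + b) ^ q = a ^ q + b ^ q := by
    intro a b; rw [hqpk]; exact add_pow_char_pow a b p k
  have hfrobsub : ∀ a b : F, (a - b) ^ q = a ^ q - b ^ q := by
    intro a b; rw [hqpk]; exact sub_pow_char_pow a b k
  have hqq : ∀ a : F, (a ^ q) ^ q = a := by
    intro a
    rw [← pow_mul, show q * q = Fintype.card F by rw [hF]; ring]
    exact FiniteField.pow_card a
  have key : ∀ z : F,
      (v 0 * z + v 3 ^ q * z ^ q) * ((v 0 * z + v 3 ^ q * z ^ q) ^ q)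
        - (v 2 * z + v 1 ^ q * z ^ q) * ((v 2 * z + v 1 ^ q * z ^ q) ^ q)
      = Qf v * z ^ 2 + Hf q v * (z ^ q * z) + Qf v ^ q * (z ^ q) ^ 2 := by
    intro z
    have e1 : (v 0 * z + v 3 ^ q * z ^ q) ^ q = v 0 ^ q * z ^ q + v 3 * z := by
      rw [hfrobadd, mul_pow, mul_pow, hqq, hqq]
    have e2 : (v 2 * z + v 1 ^ q * z ^ q) ^ q = v 2 ^ q * z ^ q + v 1 * z := by
      rw [hfrobadd, mul_pow, mul_pow, hqq, hqq]
    have e3 : Qf v ^ q = v 0 ^ q * v 3 ^ q - v 1 ^ q * v 2 ^ q := by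
      rw [Qf, hfrobsub, mul_pow, mul_pow]
    rw [e1, e2, e3, Qf, Hf]
    simp only [pow_succ]
    ring
  constructor
  · rintro hns ⟨z, hz1, hz2⟩
    have hz0 : z ≠ 0 := by
      intro h
      rw [h, zero_pow (by omega : q + 1 ≠ 0)] at hz1
      exact one_ne_zero hz1.symm
    obtain ⟨y, hy0, hy⟩ := pow_sub_one_surj q hq2 hF z hz1
    set A := v 0 * y + v 3 ^ q * y ^ q with hAdef
    set B := v 2 * y + v 1 ^ q * y ^ q with hBdef
    have hyq : y ^ q = z * y := by
      rw [← hy, ← pow_succ]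
      congr 1
      omega
    have hAB : A * A ^ q = B * B ^ q := by
      have hk2 := key y
      have he : Qf v * y ^ 2 + Hf q v * (y ^ q * y) + Qf v ^ q * (y ^ q) ^ 2
          = (Qf v + Hf q v * z + Qf v ^ q * z ^ 2) * y ^ 2 := by
        rw [hyq]; ring
      rw [he, hz2, zero_mul] at hk2
      exact sub_eq_zero.mp hk2
    by_cases hB : B = 0
    · have hA : A = 0 := by
        have h0 : A * A ^ q = 0 := by rw [hAB, hB, zero_mul]
        rcases mul_eq_zero.mp h0 with h | h
        · exact h
        · exact (pow_eq_zero_iff (by omega : q ≠ 0)).mp h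
      exact hns 1 y one_ne_zero hy0 (by rw [one_pow, mul_one, mul_one, ← hAdef, ← hBdef, hA, hB, add_zero])
    · have heven : Even (q + 1) := by
        rcases hodd with ⟨m, hm⟩
        exact ⟨m + 1, by omega⟩
      have hw : (-(A / B)) ^ (q + 1) = 1 := by
        rw [heven.neg_pow, div_pow, pow_succ, pow_succ,
          show A ^ q * A = B ^ q * B by rw [mul_comm, hAB, mul_comm]]
        exact div_self (mul_ne_zero (pow_ne_zero _ hB) hB)
      obtain ⟨x, hx0, hx⟩ := pow_sub_one_surj q hq2 hF (-(A / B)) hw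
      have hxq : x ^ q = -(A / B) * x := by
        rw [← hx, ← pow_succ]
        congr 1
        omega
      refine hns x y hx0 hy0 ?_
      rw [← hAdef, ← hBdef, hxq]
      field_simp
      ring
  · intro h x z hx hz heq
    apply h
    set A := v 0 * z + v 3 ^ q * z ^ q with hAdef
    set B := v 2 * z + v 1 ^ q * z ^ q with hBdef
    have harith : (q - 1) * (q + 1) + 1 = q ^ 2 := by
      cases q with
      | zero => omega
      | succ m => simp [Nat.succ_sub_one]; ring
    refine ⟨z ^ (q - 1), ?_, ?_⟩
    · rw [← pow_mul]
      have hzc : z ^ (q ^ 2) = z := by rw [← hF]; exact FiniteField.pow_card z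
      have h1 : z ^ ((q - 1) * (q + 1)) * z = 1 * z := by
        rw [one_mul, ← pow_succ, harith, hzc]
      exact mul_right_cancel₀ hz h1
    · have h1 : A * x = -(B * x ^ q) := eq_neg_of_add_eq_zero_left heq
      have h2 : A ^ q * x ^ q = -(B ^ q * x) := by
        have hc := congrArg (· ^ q) h1
        simpa [mul_pow, hodd.neg_pow, hqq x] using hc
      have h3 : (A * x) * (A ^ q * x ^ q) = (B * x ^ q) * (B ^ q * x) := by
        rw [h1, h2]; ring
      have hxx : x * x ^ q ≠ 0 := mul_ne_zero hx (pow_ne_zero _ hx)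
      have hAB : A * A ^ q = B * B ^ q := by
        refine mul_right_cancel₀ hxx ?_
        linear_combination h3
      have hzq : z ^ q = z ^ (q - 1) * z := by
        rw [← pow_succ]
        congr 1
        omega
      have hz2 : (z : F) ^ 2 ≠ 0 := pow_ne_zero _ hz
      refine mul_right_cancel₀ hz2 ?_
      rw [zero_mul]
      calc (Qf v + Hf q v * (z ^ (q - 1)) + Qf v ^ q * (z ^ (q - 1)) ^ 2) * z ^ 2
          = Qf v * z ^ 2 + Hf q v * (z ^ q * z) + Qf v ^ q * (z ^ q) ^ 2 := by
            rw [hzq]; ring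
        _ = A * A ^ q - B * B ^ q := (key z).symm
        _ = 0 := by rw [hAB, sub_self]
end

section
/- Let v ∈ F⁴. Then v is nonsingular if and only if Δ(v) is a nonzero square of 𝔽_q, i.e., if and only if there exists s ∈ F with s^q = s, s ≠ 0 and Δ(v) = s². -/
/-!
Write `σ` for the Frobenius `x ↦ x ^ q`, an involution of `F` with fixed field `𝔽_q`, and
`N x = x * σ x`. For fixed `z ≠ 0`, Hilbert 90 shows that `A x + B σ(x) = 0` has a solution
`x ≠ 0` iff `N A = N B`; for the `A, B` of the nonsingularity condition,
`N A - N B = N z * (H + Q u + σ (Q u))` with `u = z / σ z`, and again by Hilbert 90 such `u` are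
exactly the elements of norm one. So `v` is singular iff some `w = Q u` has trace `-H` and norm
`N Q`, i.e. iff the roots of `X² + H X + N Q` are swapped by `σ`, i.e. iff `Δ = y²` with
`σ y = -y`. Every element of `𝔽_q` is a square in `F`, so in odd characteristic this happens
exactly when `Δ` is not a nonzero square of `𝔽_q`.
-/

section Involution

variable {F : Type*} [Field F] (σ : F →+* F)

/- `H`, `Δ` and singularity of `v`, with the Frobenius `x ↦ x ^ q` replaced by an arbitrary
ring endomorphism `σ`. -/
def herm (v : Fin 4 → F) : F :=
  v 0 * σ (v 0) - v 1 * σ (v 1) - v 2 * σ (v 2) + v 3 * σ (v 3)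

def discr (v : Fin 4 → F) : F :=
  herm σ v ^ 2 - 4 * (Qf v * σ (Qf v))

def IsSingular (v : Fin 4 → F) : Prop :=
  ∃ z : F, z ≠ 0 ∧ ∃ x : F, x ≠ 0 ∧
    (v 0 * z + σ (v 3) * σ z) * x + (v 2 * z + σ (v 1) * σ z) * σ x = 0

variable {σ}

theorem map_herm (hσ : Function.Involutive σ) (v : Fin 4 → F) : σ (herm σ v) = herm σ v := by
  simp only [herm, map_add, map_sub, map_mul, hσ _]
  ring

theorem map_discr (hσ : Function.Involutive σ) (v : Fin 4 → F) : σ (discr σ v) = discr σ v := by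
  simp only [discr, map_sub, map_pow, map_mul, map_ofNat, map_herm hσ, hσ _]
  ring

/-- Hilbert 90 for the quadratic extension cut out by `σ`, with the explicit solution
`z = a + σ (c * a)`. -/
theorem exists_ne_zero_map_eq_mul (hσ : Function.Involutive σ) (hne : σ ≠ RingHom.id F)
    {c : F} (hc : c * σ c = 1) : ∃ z, z ≠ 0 ∧ σ z = c * z := by
  have key : ∀ a, σ (a + σ (c * a)) = c * (a + σ (c * a)) := fun a => by
    simp only [map_add, map_mul, hσ _]
    linear_combination -σ a * hc
  by_cases h1 : 1 + σ (c * 1) = 0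
  · have hc' : c = -1 := by
      have := congrArg σ h1
      simp only [map_add, map_one, mul_one, hσ _, map_zero] at this
      linear_combination this
    obtain ⟨a, ha⟩ : ∃ a, σ a ≠ a := by
      by_contra! h
      exact hne (RingHom.ext h)
    refine ⟨a + σ (c * a), fun h => ha ?_, key a⟩
    rw [hc', neg_one_mul, map_neg] at h
    linear_combination -h
  · exact ⟨_, h1, key 1⟩

theorem exists_mul_add_mul_map_eq_zero_iff (hσ : Function.Involutive σ)
    (hne : σ ≠ RingHom.id F) {A B : F} :
    (∃ x, x ≠ 0 ∧ A * x + B * σ x = 0) ↔ A * σ A = B * σ B := by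
  constructor
  · rintro ⟨x, hx, h⟩
    have hAx : A * x = -(B * σ x) := by linear_combination h
    have hnorm := congrArg (fun t => t * σ t) hAx
    simp only [map_neg, map_mul, hσ _] at hnorm
    have hx' : x * σ x ≠ 0 := mul_ne_zero hx ((map_ne_zero σ).mpr hx)
    apply mul_right_cancel₀ hx'
    linear_combination hnorm
  · intro h
    by_cases hB : B = 0
    · have hA : A = 0 := by simpa [hB] using h
      exact ⟨1, one_ne_zero, by simp [hA, hB]⟩
    · have hσB : σ B ≠ 0 := (map_ne_zero σ).mpr hB
      obtain ⟨x, hx, hσx⟩ := exists_ne_zero_map_eq_mul hσ hne (c := -(A / B)) (by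
        rw [map_neg, map_div₀]
        field_simp
        linear_combination h)
      refine ⟨x, hx, ?_⟩
      rw [hσx]
      field_simp
      ring

theorem isSingular_iff_exists_norm_eq_one (hσ : Function.Involutive σ)
    (hne : σ ≠ RingHom.id F) (v : Fin 4 → F) :
    IsSingular σ v ↔ ∃ u, u * σ u = 1 ∧ herm σ v + Qf v * u + σ (Qf v * u) = 0 := by
  have hnorm : ∀ z, (v 0 * z + σ (v 3) * σ z) * σ (v 0 * z + σ (v 3) * σ z)
      - (v 2 * z + σ (v 1) * σ z) * σ (v 2 * z + σ (v 1) * σ z)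
      = z * σ z * herm σ v + Qf v * z ^ 2 + σ (Qf v) * σ z ^ 2 := fun z => by
    simp only [herm, Qf, map_add, map_sub, map_mul, hσ _]
    ring
  have hsing : IsSingular σ v ↔ ∃ z, z ≠ 0 ∧
      z * σ z * herm σ v + Qf v * z ^ 2 + σ (Qf v) * σ z ^ 2 = 0 := by
    refine exists_congr fun z => and_congr_right fun _ => ?_
    rw [exists_mul_add_mul_map_eq_zero_iff hσ hne, ← sub_eq_zero, hnorm]
  rw [hsing]
  constructor
  · rintro ⟨z, hz, h⟩
    have hσz : σ z ≠ 0 := (map_ne_zero σ).mpr hz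
    refine ⟨z / σ z, ?_, ?_⟩
    · rw [map_div₀, hσ]
      field_simp
    · rw [map_mul, map_div₀, hσ]
      field_simp
      linear_combination h
  · rintro ⟨u, hu, h⟩
    obtain ⟨z, hz, hσz⟩ := exists_ne_zero_map_eq_mul hσ hne (c := σ u) (by rw [hσ, mul_comm, hu])
    refine ⟨z, hz, ?_⟩
    rw [map_mul] at h
    rw [hσz]
    linear_combination z ^ 2 * σ u * h - Qf v * z ^ 2 * hu

theorem exists_norm_eq_one_iff_exists_trace_norm {H Q : F} :
    (∃ u, u * σ u = 1 ∧ H + Q * u + σ (Q * u) = 0) ↔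
      ∃ w, w + σ w = -H ∧ w * σ w = Q * σ Q := by
  constructor
  · rintro ⟨u, hu, h⟩
    refine ⟨Q * u, by linear_combination h, ?_⟩
    rw [map_mul]
    linear_combination Q * σ Q * hu
  · rintro ⟨w, htr, hn⟩
    by_cases hQ : Q = 0
    · have hw : w = 0 := by simpa [hQ] using hn
      refine ⟨1, by simp, ?_⟩
      simp only [hw, map_zero, add_zero] at htr
      simp [hQ, neg_eq_zero.mp htr.symm]
    · have hσQ : σ Q ≠ 0 := (map_ne_zero σ).mpr hQ
      refine ⟨w / Q, ?_, ?_⟩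
      · rw [map_div₀]
        field_simp
        linear_combination hn
      · rw [mul_div_cancel₀ w hQ]
        linear_combination htr

theorem exists_trace_norm_iff_exists_sq (h2 : (2 : F) ≠ 0) {H N : F} (hH : σ H = H) :
    (∃ w, w + σ w = -H ∧ w * σ w = N) ↔ ∃ y, σ y = -y ∧ H ^ 2 - 4 * N = y ^ 2 := by
  constructor
  · rintro ⟨w, htr, hn⟩
    refine ⟨2 * w + H, ?_, ?_⟩
    · rw [map_add, map_mul, map_ofNat, hH]
      linear_combination 2 * htr
    · linear_combination 4 * hn - 4 * w * htr
  · rintro ⟨y, hy, hd⟩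
    refine ⟨(y - H) / 2, ?_, ?_⟩ <;> rw [map_div₀, map_sub, map_ofNat, hy, hH]
    · field_simp
      ring
    · field_simp
      linear_combination hd

theorem isSingular_iff_exists_sq (hσ : Function.Involutive σ) (hne : σ ≠ RingHom.id F)
    (h2 : (2 : F) ≠ 0) (v : Fin 4 → F) :
    IsSingular σ v ↔ ∃ y, σ y = -y ∧ discr σ v = y ^ 2 := by
  rw [isSingular_iff_exists_norm_eq_one hσ hne, exists_norm_eq_one_iff_exists_trace_norm,
    exists_trace_norm_iff_exists_sq h2 (map_herm hσ v), discr]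

theorem exists_sq_map_eq_neg_iff (h2 : (2 : F) ≠ 0) {D : F} (hD : σ D = D) (hsq : IsSquare D) :
    (∃ y, σ y = -y ∧ D = y ^ 2) ↔ ¬∃ s, σ s = s ∧ s ≠ 0 ∧ D = s ^ 2 := by
  constructor
  · rintro ⟨y, hy, rfl⟩ ⟨s, hs, hs0, hys⟩
    rcases sq_eq_sq_iff_eq_or_eq_neg.mp hys with rfl | rfl
    · exact hs0 (mul_left_cancel₀ h2 (by linear_combination hy - hs))
    · exact hs0 (mul_left_cancel₀ h2 (by rw [map_neg] at hy; linear_combination -hy - hs))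
  · intro hno
    obtain ⟨t, rfl⟩ := hsq
    have : σ t ^ 2 = t ^ 2 := by rw [← map_pow, sq, hD]
    rcases sq_eq_sq_iff_eq_or_eq_neg.mp this with ht | ht
    · by_cases ht0 : t = 0
      · exact ⟨0, by simp, by simp [ht0]⟩
      · exact absurd ⟨t, ht, ht0, (sq t).symm⟩ hno
    · exact ⟨t, ht, (sq t).symm⟩

theorem nonsingular_iff_not_isSingular {q : ℕ} (hσq : ∀ x, σ x = x ^ q) (v : Fin 4 → F) :
    Nonsingular q v ↔ ¬IsSingular σ v := by
  simp only [Nonsingular, IsSingular, hσq, not_exists, not_and]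
  exact ⟨fun h z hz x hx => h x z hx hz, fun h x z hx hz => h z hz x hx⟩

theorem deltaf_eq_discr {q : ℕ} (hσq : ∀ x, σ x = x ^ q) (v : Fin 4 → F) :
    Deltaf q v = discr σ v := by
  simp only [Deltaf, discr, herm, Hf, hσq]
  ring

end Involution

section FiniteField

open Polynomial

variable {F : Type*} [Field F] [Fintype F] {q : ℕ}

theorem exists_pow_ne_self_of_card_eq_sq (hF : Fintype.card F = q ^ 2) : ∃ x : F, x ^ q ≠ x := by
  have hq : 1 < q := by
    by_contra! h
    have := hF ▸ Fintype.one_lt_card (α := F)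
    nlinarith
  by_contra! h
  classical
  have hroots : (Finset.univ : Finset F).val ⊆ (X ^ q - X : F[X]).roots := fun x _ => by
    rw [mem_roots (FiniteField.X_pow_card_sub_X_ne_zero F hq)]
    simp [h x]
  have := card_le_degree_of_subset_roots hroots
  rw [Finset.card_univ, hF, FiniteField.X_pow_card_sub_X_natDegree_eq F hq] at this
  nlinarith

theorem exists_involutive_ringHom_eq_pow (hF : Fintype.card F = q ^ 2) :
    ∃ σ : F →+* F, Function.Involutive σ ∧ σ ≠ RingHom.id F ∧ ∀ x, σ x = x ^ q := by
  obtain ⟨p, hchar⟩ := CharP.exists F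
  obtain ⟨n, hp, hcard⟩ := FiniteField.card F p
  have := Fact.mk hp
  obtain ⟨m, -, hq⟩ := (Nat.dvd_prime_pow hp).1 (hcard ▸ hF ▸ dvd_pow_self q two_ne_zero)
  have hσq : ∀ x, iterateFrobenius F p m x = x ^ q := fun x => by rw [iterateFrobenius_def, hq]
  refine ⟨iterateFrobenius F p m, fun x => ?_, fun h => ?_, hσq⟩
  · rw [hσq, hσq, ← pow_mul, ← sq, ← hF, FiniteField.pow_card]
  · obtain ⟨x, hx⟩ := exists_pow_ne_self_of_card_eq_sq hF
    exact hx (by rw [← hσq, h, RingHom.id_apply])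

theorem ringChar_ne_two_of_card_eq_sq (hF : Fintype.card F = q ^ 2) (hodd : Odd q) :
    ringChar F ≠ 2 := by
  rw [Ne, FiniteField.even_card_iff_char_two, hF, Nat.odd_iff.mp hodd.pow]
  exact one_ne_zero

/-- `D ^ (q - 1) = 1` and `q - 1` divides `(q² - 1) / 2`. -/
theorem isSquare_of_pow_eq_self (hF : Fintype.card F = q ^ 2) (hodd : Odd q) {D : F}
    (hD : D ^ q = D) : IsSquare D := by
  rcases eq_or_ne D 0 with rfl | hD0
  · exact ⟨0, (mul_zero 0).symm⟩
  rw [FiniteField.isSquare_iff (ringChar_ne_two_of_card_eq_sq hF hodd) hD0, hF]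
  obtain ⟨m, rfl⟩ := hodd
  have hD1 : D ^ (2 * m) = 1 := by
    apply mul_left_cancel₀ hD0
    rw [← pow_succ', hD, mul_one]
  have : (2 * m + 1) ^ 2 / 2 = 2 * m * (m + 1) := by
    ring_nf
    omega
  rw [this, pow_mul, hD1, one_pow]

end FiniteField

theorem stmt5_general (q : ℕ) (hodd : Odd q)
    (F : Type*) [Field F] [Fintype F] (hF : Fintype.card F = q ^ 2)
    (v : Fin 4 → F) :
    Nonsingular q v ↔ ∃ s : F, s ^ q = s ∧ s ≠ 0 ∧ Deltaf q v = s ^ 2 := by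
  obtain ⟨σ, hσ, hne, hσq⟩ := exists_involutive_ringHom_eq_pow hF
  have h2 : (2 : F) ≠ 0 := Ring.two_ne_zero (ringChar_ne_two_of_card_eq_sq hF hodd)
  have hΔ : Deltaf q v = discr σ v := deltaf_eq_discr hσq v
  have hΔfix : σ (Deltaf q v) = Deltaf q v := hΔ ▸ map_discr hσ v
  have hΔsq : IsSquare (Deltaf q v) := isSquare_of_pow_eq_self hF hodd (hσq _ ▸ hΔfix)
  rw [nonsingular_iff_not_isSingular hσq, isSingular_iff_exists_sq hσ hne h2, ← hΔ,
    exists_sq_map_eq_neg_iff h2 hΔfix hΔsq, not_not]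
  simp only [hσq]

/-- `v` is nonsingular iff `Δ(v)` is a nonzero square of `𝔽_q`. -/
theorem stmt5 (q : ℕ) (hq : ∃ p k : ℕ, p.Prime ∧ 0 < k ∧ q = p ^ k) (hodd : Odd q)
    (F : Type*) [Field F] [Fintype F] (hF : Fintype.card F = q ^ 2)
    (v : Fin 4 → F) :
    Nonsingular q v ↔ ∃ s : F, s ^ q = s ∧ s ≠ 0 ∧ Deltaf q v = s ^ 2 :=
  stmt5_general q hodd F hF v
end

section
/- Let v ∈ F⁴ be nonzero. Then Δ(v) = 0 if and only if there exist two F-linearly independent Σ-vectors u, w with v ∈ span_F{u, w} such that the number of one-dimensional 𝔽_q-subspaces ⟨(s,t)⟩ of 𝔽_q² with Q(su + tw) = 0 is equal to 1 or to q+1. (That is, the variety Δ = 0 consists exactly of the points lying on an extended tangent line or an extended generator of the subquadric Q₀ of the Baer subgeometry Σ.) -/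
/-! Fix `i ∈ F ∖ 𝔽_q`. Every `v ∈ F⁴` is `a + i c` with `a, c` Σ-vectors or zero. For Σ-vectors
`u, w` the binary form `Q(su + tw) = Q(u) s² + B(u,w) st + Q(w) t²` (`B` the polar form of `Q`)
has coefficients in `𝔽_q`, and `Δ(xu + yw) = disc · (x y^q - x^q y)²` with
`disc = B(u,w)² - 4 Q(u) Q(w)`. Over `𝔽_q` this form has `1` or `q + 1` projective zeros when
`disc = 0`, and `0` or `2` otherwise. So if `a, c` are independent, `Δ(v) = 0` says exactly that
`⟨a, c⟩` is a tangent line or a generator; if `v` is a multiple of one Σ-vector `z`, a Σ-vector `w`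
that is `Q`-isotropic and orthogonal to `z` gives such a line through `v`. -/

section FixedField

open Polynomial

theorem X_pow_sub_X_dvd_X_pow_pow_sub_X {R : Type*} [CommRing R] {p k : ℕ} [ExpChar R p]
    (m : ℕ) : (X ^ p ^ k - X : R[X]) ∣ X ^ (p ^ k) ^ m - X := by
  induction m with
  | zero => simp
  | succ m ih =>
    have h : (X : R[X]) ^ (p ^ k) ^ (m + 1) - X =
        (X ^ (p ^ k) ^ m - X) ^ p ^ k + (X ^ p ^ k - X) := by
      rw [sub_pow_expChar_pow, pow_succ (p ^ k) m, pow_mul]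
      ring
    rw [h]
    exact dvd_add (dvd_pow ih (pow_ne_zero k (expChar_pos R p).ne')) dvd_rfl

theorem ncard_setOf_pow_eq_self {F : Type*} [Field F] [Fintype F] {p k m : ℕ} [Fact p.Prime]
    [CharP F p] (hk : k ≠ 0) (hF : Fintype.card F = (p ^ k) ^ m) :
    {x : F | x ^ p ^ k = x}.ncard = p ^ k := by
  classical
  have hsplit : Splits (X ^ Fintype.card F - X : F[X]) := by
    rw [splits_iff_card_roots, FiniteField.roots_X_pow_card_sub_X,
      FiniteField.X_pow_card_sub_X_natDegree_eq F Fintype.one_lt_card, ← Finset.card_def,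
      Finset.card_univ]
  have hdvd := X_pow_sub_X_dvd_X_pow_pow_sub_X (R := F) (p := p) (k := k) m
  rw [← hF] at hdvd
  have hroots : ((X ^ p ^ k - X : F[X]).rootSet F) = {x : F | x ^ p ^ k = x} := by
    ext x
    simp [mem_rootSet, FiniteField.X_pow_card_pow_sub_X_ne_zero F hk (Fact.out : p.Prime).one_lt,
      sub_eq_zero]
  have hcard := card_rootSet_eq_natDegree (K := F)
    (galois_poly_separable (K := F) p (p ^ k) (dvd_pow_self p hk))
    (by simpa using hsplit.of_dvd (FiniteField.X_pow_card_sub_X_ne_zero F Fintype.one_lt_card) hdvd)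
  rw [FiniteField.X_pow_card_pow_sub_X_natDegree_eq F hk (Fact.out : p.Prime).one_lt] at hcard
  rw [← hroots, Set.ncard_eq_toFinset_card', Set.toFinset_card]
  convert hcard

end FixedField

section PowAdditive

variable {F : Type*} [Field F] {q : ℕ}

theorem zero_pow_of_add_pow (hadd : ∀ x y : F, (x + y) ^ q = x ^ q + y ^ q) :
    (0 : F) ^ q = 0 := by
  simpa using hadd 0 0

theorem neg_pow_of_add_pow (hadd : ∀ x y : F, (x + y) ^ q = x ^ q + y ^ q) (x : F) :
    (-x) ^ q = -x ^ q := by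
  have h := hadd x (-x)
  rw [add_neg_cancel, zero_pow_of_add_pow hadd] at h
  linear_combination -h

theorem sub_pow_of_add_pow (hadd : ∀ x y : F, (x + y) ^ q = x ^ q + y ^ q) (x y : F) :
    (x - y) ^ q = x ^ q - y ^ q := by
  rw [sub_eq_add_neg, hadd, neg_pow_of_add_pow hadd, sub_eq_add_neg]

theorem two_pow_of_add_pow (hadd : ∀ x y : F, (x + y) ^ q = x ^ q + y ^ q) :
    (2 : F) ^ q = 2 := by
  simpa [one_add_one_eq_two] using hadd 1 1

end PowAdditive

section Lines

variable {F : Type*} [Field F] (q : ℕ)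

def fixedLine (s t : F) : Set (F × F) :=
  {p | ∃ e : F, e ^ q = e ∧ p = (e * s, e * t)}

def zeroLines (a b c : F) : Set (Set (F × F)) :=
  {L | ∃ s t : F, s ^ q = s ∧ t ^ q = t ∧ (s, t) ≠ (0, 0) ∧
    a * (s * s) + b * (s * t) + c * (t * t) = 0 ∧ L = fixedLine q s t}

def fixedRoots (a b c : F) : Set F :=
  {x | x ^ q = x ∧ a * (x * x) + b * x + c = 0}

variable {q}

theorem fixedLine_mul {c : F} (hc : c ^ q = c) (hc0 : c ≠ 0) (s t : F) :
    fixedLine q (c * s) (c * t) = fixedLine q s t := by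
  ext p
  constructor
  · rintro ⟨e, he, rfl⟩
    exact ⟨e * c, by rw [mul_pow, he, hc], by simp only [mul_assoc]⟩
  · rintro ⟨e, he, rfl⟩
    refine ⟨e * c⁻¹, by rw [mul_pow, inv_pow, he, hc], ?_⟩
    simp only [Prod.mk.injEq]
    constructor <;> field_simp

theorem mem_fixedLine_self (s t : F) : (s, t) ∈ fixedLine q s t :=
  ⟨1, one_pow q, by simp⟩

theorem fixedLine_one_injective : Function.Injective (fun σ : F => fixedLine q σ 1) := by
  intro σ σ' (h : fixedLine q σ 1 = fixedLine q σ' 1)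
  obtain ⟨e, -, he⟩ := h ▸ mem_fixedLine_self (q := q) σ 1
  simp only [Prod.mk.injEq, mul_one] at he
  rw [he.1, ← he.2, one_mul]

theorem fixedLine_one_ne (σ : F) : fixedLine q σ 1 ≠ fixedLine q 1 0 := by
  intro h
  obtain ⟨e, -, he⟩ := h ▸ mem_fixedLine_self (q := q) σ 1
  simp at he

theorem zeroLines_eq (h0 : (0 : F) ^ q = 0) (a b c : F) :
    zeroLines q a b c =
      {L | a = 0 ∧ L = fixedLine q 1 0} ∪ (fun σ => fixedLine q σ 1) '' fixedRoots q a b c := by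
  ext L
  constructor
  · rintro ⟨s, t, hs, ht, hst, hQ, rfl⟩
    rcases eq_or_ne t 0 with rfl | ht0
    · have hs0 : s ≠ 0 := by simpa using hst
      left
      refine ⟨by simpa [hs0] using hQ, ?_⟩
      simpa using fixedLine_mul hs hs0 1 0
    · right
      refine ⟨s / t, ⟨by rw [div_pow, hs, ht], ?_⟩, ?_⟩
      · field_simp
        linear_combination hQ
      · dsimp only
        rw [← fixedLine_mul ht ht0 (s / t) 1, mul_div_cancel₀ s ht0, mul_one]
  · rintro (⟨rfl, rfl⟩ | ⟨σ, ⟨hσ, hQ⟩, rfl⟩)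
    · exact ⟨1, 0, one_pow q, h0, by simp, by ring, rfl⟩
    · exact ⟨σ, 1, hσ, one_pow q, by simp, by linear_combination hQ, rfl⟩

theorem ncard_zeroLines [Finite F] [DecidableEq F] (h0 : (0 : F) ^ q = 0) (a b c : F) :
    (zeroLines q a b c).ncard = (if a = 0 then 1 else 0) + (fixedRoots q a b c).ncard := by
  rw [zeroLines_eq h0, Set.ncard_union_eq, Set.ncard_image_of_injective _ fixedLine_one_injective]
  · split_ifs with ha <;> simp [ha]
  · rw [Set.disjoint_left]
    rintro _ ⟨-, rfl⟩ ⟨σ, -, hσ⟩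
    exact fixedLine_one_ne σ hσ

end Lines

section Roots

variable {F : Type*} [Field F] {q : ℕ} {a b c : F}

theorem fixedRoots_zero_left (hadd : ∀ x y : F, (x + y) ^ q = x ^ q + y ^ q) (hb0 : b ≠ 0)
    (hb : b ^ q = b) (hc : c ^ q = c) : fixedRoots q 0 b c = {-c / b} := by
  ext x
  simp only [fixedRoots, Set.mem_ofPred_eq, Set.mem_singleton_iff, zero_mul, zero_add]
  constructor
  · rintro ⟨-, h⟩
    field_simp
    linear_combination h
  · rintro rfl
    refine ⟨by rw [div_pow, neg_pow_of_add_pow hadd, hb, hc], ?_⟩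
    field_simp
    ring

theorem fixedRoots_of_discrim_eq_zero [NeZero (2 : F)]
    (hadd : ∀ x y : F, (x + y) ^ q = x ^ q + y ^ q) (ha0 : a ≠ 0) (ha : a ^ q = a)
    (hb : b ^ q = b) (hd : discrim a b c = 0) : fixedRoots q a b c = {-b / (2 * a)} := by
  ext x
  simp only [fixedRoots, Set.mem_ofPred_eq, Set.mem_singleton_iff,
    quadratic_eq_zero_iff_of_discrim_eq_zero ha0 hd]
  refine ⟨And.right, ?_⟩
  rintro rfl
  exact ⟨by rw [div_pow, neg_pow_of_add_pow hadd, mul_pow, two_pow_of_add_pow hadd, ha, hb], rfl⟩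

theorem ncard_fixedRoots_of_discrim_ne_zero [NeZero (2 : F)]
    (hadd : ∀ x y : F, (x + y) ^ q = x ^ q + y ^ q) (ha0 : a ≠ 0) (ha : a ^ q = a)
    (hb : b ^ q = b) (hd : discrim a b c ≠ 0) :
    (fixedRoots q a b c).ncard = 0 ∨ (fixedRoots q a b c).ncard = 2 := by
  rcases (fixedRoots q a b c).eq_empty_or_nonempty with h | ⟨σ, hσ, hQ⟩
  · left
    rw [h, Set.ncard_empty]
  right
  set s := 2 * a * σ + b
  have hs : discrim a b c = s * s := by rw [discrim_eq_sq_of_quadratic_eq_zero hQ, sq]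
  have hsq : s ^ q = s := by
    simp only [s, hadd, mul_pow, two_pow_of_add_pow hadd, ha, hσ, hb]
  clear_value s
  have hroots : fixedRoots q a b c = {(-b + s) / (2 * a), (-b - s) / (2 * a)} := by
    ext x
    simp only [fixedRoots, Set.mem_ofPred_eq, Set.mem_insert_iff, Set.mem_singleton_iff,
      quadratic_eq_zero_iff ha0 hs]
    refine ⟨And.right, fun hx => ⟨?_, hx⟩⟩
    rcases hx with rfl | rfl <;>
      simp only [div_pow, hadd, sub_pow_of_add_pow hadd, neg_pow_of_add_pow hadd, mul_pow,
        two_pow_of_add_pow hadd, ha, hb, hsq]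
  rw [hroots, Set.ncard_pair]
  intro h
  apply hd
  rw [div_left_inj' (mul_ne_zero two_ne_zero ha0)] at h
  have hs0 : 2 * s = 0 := by linear_combination h
  rw [hs, (mul_eq_zero.1 hs0).resolve_left two_ne_zero, mul_zero]

end Roots

section Count

variable {F : Type*} [Field F] [Finite F] {q : ℕ} {a b c : F}

theorem ncard_zeroLines_of_discrim_eq_zero [NeZero (2 : F)]
    (hadd : ∀ x y : F, (x + y) ^ q = x ^ q + y ^ q) (hK : {x : F | x ^ q = x}.ncard = q)
    (ha : a ^ q = a) (hb : b ^ q = b) (hd : discrim a b c = 0) :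
    (zeroLines q a b c).ncard = 1 ∨ (zeroLines q a b c).ncard = q + 1 := by
  classical
  rw [ncard_zeroLines (zero_pow_of_add_pow hadd)]
  rcases eq_or_ne a 0 with rfl | ha0
  · obtain rfl : b = 0 := by simpa [discrim] using hd
    rcases eq_or_ne c 0 with rfl | hc0
    · right
      simp [fixedRoots, hK, add_comm]
    · left
      simp [fixedRoots, hc0]
  · left
    rw [if_neg ha0, fixedRoots_of_discrim_eq_zero hadd ha0 ha hb hd, Set.ncard_singleton]

theorem ncard_zeroLines_of_discrim_ne_zero [NeZero (2 : F)]
    (hadd : ∀ x y : F, (x + y) ^ q = x ^ q + y ^ q) (ha : a ^ q = a) (hb : b ^ q = b)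
    (hc : c ^ q = c) (hd : discrim a b c ≠ 0) :
    (zeroLines q a b c).ncard = 0 ∨ (zeroLines q a b c).ncard = 2 := by
  classical
  rw [ncard_zeroLines (zero_pow_of_add_pow hadd)]
  rcases eq_or_ne a 0 with rfl | ha0
  · have hb0 : b ≠ 0 := by
      rintro rfl
      simp [discrim] at hd
    right
    rw [if_pos rfl, fixedRoots_zero_left hadd hb0 hb hc, Set.ncard_singleton]
  · rw [if_neg ha0, zero_add]
    exact ncard_fixedRoots_of_discrim_ne_zero hadd ha0 ha hb hd

end Count

section SigmaVectors

variable {F : Type*} [Field F] {q : ℕ}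

def polarQf (u w : Fin 4 → F) : F :=
  u 0 * w 3 + u 3 * w 0 - u 1 * w 2 - u 2 * w 1

theorem Qf_smul_add_smul (u w : Fin 4 → F) (s t : F) :
    Qf (s • u + t • w) = Qf u * (s * s) + polarQf u w * (s * t) + Qf w * (t * t) := by
  simp only [Qf, polarQf, Pi.add_apply, Pi.smul_apply, smul_eq_mul]
  ring

theorem tangentCount_eq_ncard_zeroLines (u w : Fin 4 → F) :
    tangentCount q u w = (zeroLines q (Qf u) (polarQf u w) (Qf w)).ncard := by
  unfold tangentCount
  congr 1
  ext L
  refine exists₂_congr fun s t => ?_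
  rw [show Qf (fun i => s * u i + t * w i) = _ from Qf_smul_add_smul u w s t]
  rfl

variable (q) in
def sigmaVec (α β : F) : Fin 4 → F := ![α, β, β ^ q, α ^ q]

theorem isSigmaVec_iff {v : Fin 4 → F} : IsSigmaVec q v ↔ v ≠ 0 ∧ ∃ α β, v = sigmaVec q α β :=
  Iff.rfl

theorem Qf_sigmaVec_pow (hadd : ∀ x y : F, (x + y) ^ q = x ^ q + y ^ q)
    (hinv : ∀ x : F, (x ^ q) ^ q = x) (α β : F) :
    Qf (sigmaVec q α β) ^ q = Qf (sigmaVec q α β) := by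
  simp [Qf, sigmaVec, sub_pow_of_add_pow hadd, mul_pow, hinv, mul_comm]

theorem polarQf_sigmaVec_pow (hadd : ∀ x y : F, (x + y) ^ q = x ^ q + y ^ q)
    (hinv : ∀ x : F, (x ^ q) ^ q = x) (α β γ δ : F) :
    polarQf (sigmaVec q α β) (sigmaVec q γ δ) ^ q =
      polarQf (sigmaVec q α β) (sigmaVec q γ δ) := by
  simp only [polarQf, sigmaVec, Matrix.cons_val, sub_pow_of_add_pow hadd, hadd, mul_pow, hinv]
  ring

theorem Deltaf_smul_add_smul_sigmaVec (hadd : ∀ x y : F, (x + y) ^ q = x ^ q + y ^ q)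
    (hinv : ∀ x : F, (x ^ q) ^ q = x) (α β γ δ x y : F) :
    Deltaf q (x • sigmaVec q α β + y • sigmaVec q γ δ) =
      discrim (Qf (sigmaVec q α β)) (polarQf (sigmaVec q α β) (sigmaVec q γ δ))
        (Qf (sigmaVec q γ δ)) * (x * y ^ q - x ^ q * y) ^ 2 := by
  simp only [Deltaf, Hf, Qf, polarQf, discrim, sigmaVec, Pi.add_apply, Pi.smul_apply,
    smul_eq_mul, Matrix.cons_val, pow_succ _ q, hadd, sub_pow_of_add_pow hadd, mul_pow, hinv]
  ring

end SigmaVectors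

section Decomposition

variable {F : Type*} [Field F] {q : ℕ}

theorem exists_eq_add_mul_pow (hadd : ∀ x y : F, (x + y) ^ q = x ^ q + y ^ q)
    (hinv : ∀ x : F, (x ^ q) ^ q = x) {i : F} (hi : i ^ q ≠ i) (x y : F) :
    ∃ a c, x = a + i * c ∧ y = a ^ q + i * c ^ q := by
  have hd : i - i ^ q ≠ 0 := sub_ne_zero.2 (Ne.symm hi)
  have hd' : i ^ q - i ≠ 0 := sub_ne_zero.2 hi
  set c := (x - y ^ q) / (i - i ^ q) with hc
  refine ⟨x - i * c, c, by ring, ?_⟩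
  have hcq : c ^ q = (x ^ q - y) / (i ^ q - i) := by
    rw [hc, div_pow, sub_pow_of_add_pow hadd, sub_pow_of_add_pow hadd, hinv, hinv]
  rw [sub_pow_of_add_pow hadd, mul_pow, hcq]
  field_simp
  ring

theorem exists_eq_sigmaVec_add_smul_sigmaVec (hadd : ∀ x y : F, (x + y) ^ q = x ^ q + y ^ q)
    (hinv : ∀ x : F, (x ^ q) ^ q = x) {i : F} (hi : i ^ q ≠ i) (v : Fin 4 → F) :
    ∃ α β γ δ, v = sigmaVec q α β + i • sigmaVec q γ δ := by
  obtain ⟨α, γ, h0, h3⟩ := exists_eq_add_mul_pow hadd hinv hi (v 0) (v 3)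
  obtain ⟨β, δ, h1, h2⟩ := exists_eq_add_mul_pow hadd hinv hi (v 1) (v 2)
  refine ⟨α, β, γ, δ, ?_⟩
  ext j
  fin_cases j <;> simp [sigmaVec, h0, h1, h2, h3]

end Decomposition

section Partner

variable {F : Type*} [Field F] {q : ℕ} {α β j : F}

/- For `z = sigmaVec q α β` and `ε = ±1`, `w = (γ, εγ^q, εγ, γ^q)` is `Q`-isotropic and
`polarQf z w = γm + (γm)^q` with `m = α^q - εβ`; so `γ = j / m` for a nonzero `j` of trace zero
makes `w` orthogonal to `z`. -/
theorem exists_isotropic_orthogonal_of_pow_sub_mul_ne_zero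
    (hadd : ∀ x y : F, (x + y) ^ q = x ^ q + y ^ q) (hinv : ∀ x : F, (x ^ q) ^ q = x)
    {ε : F} (hε : ε * ε = 1) (hεq : ε ^ q = ε)
    (hj : j ≠ 0) (hjq : j ^ q = -j) (hm : α ^ q - ε * β ≠ 0) :
    ∃ w, IsSigmaVec q w ∧ LinearIndependent F ![sigmaVec q α β, w] ∧
      polarQf (sigmaVec q α β) w = 0 ∧ Qf w = 0 := by
  set m := α ^ q - ε * β with hm_def
  have hmq : m ^ q = α - ε * β ^ q := by
    rw [hm_def, sub_pow_of_add_pow hadd, mul_pow, hinv, hεq]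
  have hmq0 : m ^ q ≠ 0 := pow_ne_zero q hm
  set γ := j / m
  have hγ0 : γ ≠ 0 := div_ne_zero hj hm
  have hγq : (ε * γ ^ q) ^ q = ε * γ := by rw [mul_pow, hinv, hεq]
  refine ⟨sigmaVec q γ (ε * γ ^ q), ⟨fun h => hγ0 (by simpa [sigmaVec] using congr_fun h 0),
    γ, _, rfl⟩, ?_, ?_, ?_⟩
  · rw [LinearIndependent.pair_iff]
    intro s t hst
    have h0 := congr_fun hst 0
    have h2 := congr_fun hst 2
    simp only [sigmaVec, hγq, Pi.add_apply, Pi.smul_apply, smul_eq_mul, Matrix.cons_val,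
      Pi.zero_apply] at h0 h2
    have hs : s * m ^ q = 0 := by rw [hmq]; linear_combination h0 - ε * h2 + t * γ * hε
    obtain rfl := (mul_eq_zero.1 hs).resolve_right hmq0
    exact ⟨rfl, (mul_eq_zero.1 (by simpa using h0)).resolve_right hγ0⟩
  · have hγm : γ * m = j := div_mul_cancel₀ j hm
    have hγmq : γ ^ q * m ^ q = -j := by rw [← mul_pow, hγm, hjq]
    simp only [polarQf, sigmaVec, hγq, Matrix.cons_val]
    rw [hmq] at hγmq
    linear_combination hγm + hγmq
  · simp only [Qf, sigmaVec, hγq, Matrix.cons_val]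
    linear_combination (-(γ ^ q * γ)) * hε

theorem exists_isotropic_orthogonal [NeZero (2 : F)]
    (hadd : ∀ x y : F, (x + y) ^ q = x ^ q + y ^ q) (hinv : ∀ x : F, (x ^ q) ^ q = x)
    (hj : j ≠ 0) (hjq : j ^ q = -j) (hz : sigmaVec q α β ≠ 0) :
    ∃ w, IsSigmaVec q w ∧ LinearIndependent F ![sigmaVec q α β, w] ∧
      polarQf (sigmaVec q α β) w = 0 ∧ Qf w = 0 := by
  by_cases hm : α ^ q - 1 * β = 0
  · refine exists_isotropic_orthogonal_of_pow_sub_mul_ne_zero hadd hinv (ε := -1) (by ring)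
      (by rw [neg_pow_of_add_pow hadd, one_pow]) hj hjq fun hm' => hz ?_
    have hβ : (2 : F) * β = 0 := by linear_combination hm' - hm
    obtain rfl := (mul_eq_zero.1 hβ).resolve_left two_ne_zero
    obtain rfl : α = 0 := by
      rw [← hinv α, show α ^ q = 0 by simpa using hm, zero_pow_of_add_pow hadd]
    ext i
    fin_cases i <;> simp [sigmaVec, zero_pow_of_add_pow hadd]
  · exact exists_isotropic_orthogonal_of_pow_sub_mul_ne_zero hadd hinv (by ring) (one_pow q) hj hjq
      hm

end Partner

section Directions

variable {F : Type*} [Field F] [Finite F] [NeZero (2 : F)] {q : ℕ}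

theorem tangentCount_sigmaVec_of_discrim_eq_zero
    (hadd : ∀ x y : F, (x + y) ^ q = x ^ q + y ^ q) (hinv : ∀ x : F, (x ^ q) ^ q = x)
    (hK : {x : F | x ^ q = x}.ncard = q) {α β γ δ : F}
    (hd : discrim (Qf (sigmaVec q α β)) (polarQf (sigmaVec q α β) (sigmaVec q γ δ))
      (Qf (sigmaVec q γ δ)) = 0) :
    tangentCount q (sigmaVec q α β) (sigmaVec q γ δ) = 1 ∨
      tangentCount q (sigmaVec q α β) (sigmaVec q γ δ) = q + 1 := by
  rw [tangentCount_eq_ncard_zeroLines]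
  exact ncard_zeroLines_of_discrim_eq_zero hadd hK (Qf_sigmaVec_pow hadd hinv α β)
    (polarQf_sigmaVec_pow hadd hinv α β γ δ) hd

theorem exists_sigmaVec_pair_of_mem_span_singleton
    (hadd : ∀ x y : F, (x + y) ^ q = x ^ q + y ^ q) (hinv : ∀ x : F, (x ^ q) ^ q = x)
    (hK : {x : F | x ^ q = x}.ncard = q) {j : F} (hj : j ≠ 0) (hjq : j ^ q = -j)
    {z v : Fin 4 → F} (hz : IsSigmaVec q z) (hv : v ∈ Submodule.span F {z}) :
    ∃ u w : Fin 4 → F, IsSigmaVec q u ∧ IsSigmaVec q w ∧ LinearIndependent F ![u, w] ∧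
      v ∈ Submodule.span F {u, w} ∧ (tangentCount q u w = 1 ∨ tangentCount q u w = q + 1) := by
  obtain ⟨hz0, α, β, rfl⟩ := isSigmaVec_iff.1 hz
  obtain ⟨w, hw, hind, hB, hQ⟩ := exists_isotropic_orthogonal hadd hinv hj hjq hz0
  obtain ⟨c, rfl⟩ := Submodule.mem_span_singleton.1 hv
  refine ⟨_, w, ⟨hz0, α, β, rfl⟩, hw, hind, Submodule.mem_span_pair.2 ⟨c, 0, by simp⟩, ?_⟩
  obtain ⟨-, γ, δ, rfl⟩ := isSigmaVec_iff.1 hw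
  exact tangentCount_sigmaVec_of_discrim_eq_zero hadd hinv hK (by rw [discrim, hB, hQ]; ring)

theorem exists_sigmaVec_pair_of_Deltaf_eq_zero
    (hadd : ∀ x y : F, (x + y) ^ q = x ^ q + y ^ q) (hinv : ∀ x : F, (x ^ q) ^ q = x)
    (hK : {x : F | x ^ q = x}.ncard = q) {i : F} (hi : i ^ q ≠ i) {v : Fin 4 → F}
    (hΔ : Deltaf q v = 0) :
    ∃ u w : Fin 4 → F, IsSigmaVec q u ∧ IsSigmaVec q w ∧ LinearIndependent F ![u, w] ∧
      v ∈ Submodule.span F {u, w} ∧ (tangentCount q u w = 1 ∨ tangentCount q u w = q + 1) := by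
  have hj : i - i ^ q ≠ 0 := sub_ne_zero.2 (Ne.symm hi)
  have hjq : (i - i ^ q) ^ q = -(i - i ^ q) := by rw [sub_pow_of_add_pow hadd, hinv]; ring
  obtain ⟨α, β, γ, δ, rfl⟩ := exists_eq_sigmaVec_add_smul_sigmaVec hadd hinv hi v
  by_cases hind : LinearIndependent F ![sigmaVec q α β, sigmaVec q γ δ]
  · refine ⟨sigmaVec q α β, sigmaVec q γ δ, ⟨hind.ne_zero 0, α, β, rfl⟩,
      ⟨hind.ne_zero 1, γ, δ, rfl⟩, hind, Submodule.mem_span_pair.2 ⟨1, i, by rw [one_smul]⟩,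
      tangentCount_sigmaVec_of_discrim_eq_zero hadd hinv hK ?_⟩
    have h := Deltaf_smul_add_smul_sigmaVec hadd hinv α β γ δ 1 i
    rw [one_smul, hΔ, one_pow, one_mul, one_mul] at h
    exact (mul_eq_zero.1 h.symm).resolve_right (pow_ne_zero 2 (sub_ne_zero.2 hi))
  obtain ⟨z, hz, hvz⟩ : ∃ z, IsSigmaVec q z ∧
      sigmaVec q α β + i • sigmaVec q γ δ ∈ Submodule.span F {z} := by
    rcases eq_or_ne (sigmaVec q α β) 0 with hA | hA
    · rcases eq_or_ne (sigmaVec q γ δ) 0 with hC | hC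
      · exact ⟨sigmaVec q 1 0, ⟨fun h => one_ne_zero (congr_fun h 0), 1, 0, rfl⟩,
          by simp [hA, hC]⟩
      · exact ⟨_, ⟨hC, γ, δ, rfl⟩, Submodule.mem_span_singleton.2 ⟨i, by rw [hA, zero_add]⟩⟩
    · obtain ⟨μ, hμ⟩ : ∃ μ : F, μ • sigmaVec q α β = sigmaVec q γ δ := by
        simpa [LinearIndependent.pair_iff' hA] using hind
      exact ⟨_, ⟨hA, α, β, rfl⟩,
        Submodule.mem_span_singleton.2 ⟨1 + i * μ, by rw [← hμ, add_smul, one_smul, mul_smul]⟩⟩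
  exact exists_sigmaVec_pair_of_mem_span_singleton hadd hinv hK hj hjq hz hvz

theorem Deltaf_eq_zero_of_tangentCount (hadd : ∀ x y : F, (x + y) ^ q = x ^ q + y ^ q)
    (hinv : ∀ x : F, (x ^ q) ^ q = x) (hq1 : q ≠ 1) {u w v : Fin 4 → F} (hu : IsSigmaVec q u)
    (hw : IsSigmaVec q w) (hv : v ∈ Submodule.span F {u, w})
    (hcount : tangentCount q u w = 1 ∨ tangentCount q u w = q + 1) : Deltaf q v = 0 := by
  obtain ⟨-, α, β, rfl⟩ := isSigmaVec_iff.1 hu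
  obtain ⟨-, γ, δ, rfl⟩ := isSigmaVec_iff.1 hw
  obtain ⟨x, y, rfl⟩ := Submodule.mem_span_pair.1 hv
  rw [Deltaf_smul_add_smul_sigmaVec hadd hinv, mul_eq_zero]
  left
  by_contra hd
  rw [tangentCount_eq_ncard_zeroLines] at hcount
  rcases ncard_zeroLines_of_discrim_ne_zero hadd (Qf_sigmaVec_pow hadd hinv α β)
    (polarQf_sigmaVec_pow hadd hinv α β γ δ) (Qf_sigmaVec_pow hadd hinv γ δ) hd with h | h <;>
    omega

end Directions

theorem stmt6_general (q : ℕ) (hq : ∃ p k : ℕ, p.Prime ∧ 0 < k ∧ q = p ^ k) (hodd : Odd q)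
    (F : Type*) [Field F] [Fintype F] (hF : Fintype.card F = q ^ 2)
    (v : Fin 4 → F) :
    Deltaf q v = 0 ↔
      ∃ u w : Fin 4 → F, IsSigmaVec q u ∧ IsSigmaVec q w ∧
        LinearIndependent F ![u, w] ∧
        v ∈ Submodule.span F {u, w} ∧
        (tangentCount q u w = 1 ∨ tangentCount q u w = q + 1) := by
  obtain ⟨p, k, hp, hk, rfl⟩ := hq
  have := Fact.mk hp
  have : CharP F p := charP_of_card_eq_prime_pow (f := k * 2) (by rw [hF, pow_mul])
  have : NeZero (2 : F) := ⟨Ring.two_ne_zero fun h => by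
    have := FiniteField.even_card_iff_char_two.1 h
    rw [hF, ← Nat.even_iff] at this
    exact Nat.not_even_iff_odd.2 hodd.pow this⟩
  have hadd : ∀ x y : F, (x + y) ^ p ^ k = x ^ p ^ k + y ^ p ^ k :=
    fun x y => add_pow_char_pow x y p k
  have hinv : ∀ x : F, (x ^ p ^ k) ^ p ^ k = x := fun x => by
    rw [← pow_mul, ← sq, ← hF, FiniteField.pow_card]
  have hK := ncard_setOf_pow_eq_self hk.ne' hF
  have hq1 : 1 < p ^ k := Nat.one_lt_pow hk.ne' hp.one_lt
  obtain ⟨i, hi⟩ : ∃ i : F, i ^ p ^ k ≠ i := by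
    by_contra! h
    simp [h, hF] at hK
    nlinarith
  exact ⟨exists_sigmaVec_pair_of_Deltaf_eq_zero hadd hinv hK hi,
    fun ⟨_, _, hu, hw, _, hv, hc⟩ =>
      Deltaf_eq_zero_of_tangentCount hadd hinv hq1.ne' hu hw hv hc⟩

/-- `Δ(v) = 0` iff `v` lies on an extended tangent line or an extended generator of the
subquadric `Q₀` of the Baer subgeometry `Σ`. -/
theorem stmt6 (q : ℕ) (hq : ∃ p k : ℕ, p.Prime ∧ 0 < k ∧ q = p ^ k) (hodd : Odd q)
    (F : Type*) [Field F] [Fintype F] (hF : Fintype.card F = q ^ 2)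
    (v : Fin 4 → F) (hv : v ≠ 0) :
    Deltaf q v = 0 ↔
      ∃ u w : Fin 4 → F, IsSigmaVec q u ∧ IsSigmaVec q w ∧
        LinearIndependent F ![u, w] ∧
        v ∈ Submodule.span F {u, w} ∧
        (tangentCount q u w = 1 ∨ tangentCount q u w = q + 1) :=
  stmt6_general q hq hodd F hF v
end

section
/- Let v ∈ F⁴ be nonzero. Then Q(v) = 0 and H(v) = 0 hold simultaneously if and only if either v is an F-scalar multiple of a Σ-vector r with Q(r) = 0, or there exist two F-linearly independent Σ-vectors u, w with v ∈ span_F{u, w} and Q(su + tw) = 0 for all s, t ∈ 𝔽_q. (That is, the intersection of the quadric Q = 0 and the Hermitian surface H = 0 consists of the subquadric Q₀ together with all points on extended generators of Q₀.) -/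
private lemma exists_split {q : ℕ} (hq2 : 2 ≤ q) {F : Type*} [Field F] [Fintype F]
    (hF : Fintype.card F = q ^ 2) {c : F} (hc : c ^ (q + 1) = 1) :
    ∃ a : F, a ≠ 0 ∧ a ^ q * c = a := by
  classical
  have hc0 : c ≠ 0 := by
    rintro rfl; rw [zero_pow (by omega : q + 1 ≠ 0)] at hc; exact zero_ne_one hc
  obtain ⟨g, hg⟩ := IsCyclic.exists_generator (α := Fˣ)
  have horder : orderOf g = q ^ 2 - 1 := by
    rw [orderOf_eq_card_of_forall_mem_zpowers hg, Nat.card_units, Nat.card_eq_fintype_card, hF]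
  set cu : Fˣ := Units.mk0 c hc0 with hcu
  obtain ⟨m, hm⟩ := mem_powers_iff_mem_zpowers.mpr (hg cu)
  have hm' : g ^ m = cu := hm
  have h1 : g ^ (m * (q + 1)) = 1 := by
    rw [pow_mul, hm']
    ext
    push_cast [hcu]
    exact hc
  have hdvd : q ^ 2 - 1 ∣ m * (q + 1) := horder ▸ orderOf_dvd_of_pow_eq_one h1
  have hfac : q ^ 2 - 1 = (q + 1) * (q - 1) := by
    rw [Nat.sub_eq_iff_eq_add (by nlinarith)]
    obtain ⟨r, rfl⟩ : ∃ r, q = r + 2 := ⟨q - 2, by omega⟩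
    have h2 : r + 2 - 1 = r + 1 := rfl
    rw [h2]; ring
  rw [hfac, mul_comm m] at hdvd
  obtain ⟨t, ht⟩ := (Nat.mul_dvd_mul_iff_left (show 0 < q + 1 by omega)).mp hdvd
  have hm2 : g ^ ((q - 1) * t) = cu := by rw [← ht]; exact hm'
  have hb : (g ^ t) ^ (q - 1) = cu := by rw [← pow_mul, mul_comm t (q - 1)]; exact hm2
  set b : Fˣ := g ^ t with hbdef
  refine ⟨((b⁻¹ : Fˣ) : F), Units.ne_zero _, ?_⟩
  have hcb : (b : F) ^ (q - 1) = c := by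
    rw [← Units.val_pow_eq_pow_val, hb]; rfl
  have hq' : (b : F) ^ q = (b : F) ^ (q - 1) * (b : F) := by
    rw [← pow_succ]; congr 1; omega
  have hbne : (b : F) ≠ 0 := Units.ne_zero b
  have hbpne : (b : F) ^ (q - 1) ≠ 0 := pow_ne_zero _ hbne
  rw [Units.val_inv_eq_inv_val, inv_pow, hq', hcb]
  rw [mul_inv, mul_comm, ← mul_assoc]
  field_simp [hc0]

/-- The intersection of the quadric `Q = 0` and the Hermitian surface `H = 0` consists of
the subquadric `Q₀` together with all points on extended generators of `Q₀`. -/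
theorem stmt8 (q : ℕ) (hq : ∃ p k : ℕ, p.Prime ∧ 0 < k ∧ q = p ^ k) (hodd : Odd q)
    (F : Type*) [Field F] [Fintype F] (hF : Fintype.card F = q ^ 2)
    (v : Fin 4 → F) (hv : v ≠ 0) :
    (Qf v = 0 ∧ Hf q v = 0) ↔
      ((∃ (a : F) (r : Fin 4 → F), IsSigmaVec q r ∧ Qf r = 0 ∧ v = a • r) ∨
        (∃ u w : Fin 4 → F, IsSigmaVec q u ∧ IsSigmaVec q w ∧
          LinearIndependent F ![u, w] ∧
          v ∈ Submodule.span F {u, w} ∧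
          ∀ s t : F, s ^ q = s → t ^ q = t →
            Qf (fun i => s * u i + t * w i) = 0)) := by
  obtain ⟨p, k, hp, hk, hqpk⟩ := hq
  haveI hpf : Fact p.Prime := ⟨hp⟩
  have hchar : CharP F p := by
    have h0 : CharP F (ringChar F) := ringChar.charP F
    have hprime : (ringChar F).Prime := CharP.char_is_prime F (ringChar F)
    have hdvd : (ringChar F) ∣ Fintype.card F := by
      rw [← CharP.cast_eq_zero_iff F (ringChar F)]
      exact FiniteField.cast_card_eq_zero F
    rw [hF, hqpk, ← pow_mul] at hdvd
    have h1 := hprime.dvd_of_dvd_pow hdvd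
    have h2 : ringChar F = p := (Nat.prime_dvd_prime_iff_eq hprime hp).mp h1
    rwa [← h2]
  have hq0 : q ≠ 0 := by rw [hqpk]; exact pow_ne_zero _ hp.pos.ne'
  have hq2 : 2 ≤ q := by rw [hqpk]; exact Nat.one_lt_pow hk.ne' hp.one_lt
  have fr_add : ∀ x y : F, (x + y) ^ q = x ^ q + y ^ q := by
    intro x y; rw [hqpk]; exact add_pow_char_pow x y p k
  have fr_sub : ∀ x y : F, (x - y) ^ q = x ^ q - y ^ q := by
    intro x y; rw [hqpk]; exact sub_pow_char_pow x y k
  have frr : ∀ x : F, (x ^ q) ^ q = x := by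
    intro x
    rw [← pow_mul, ← pow_two, ← hF]
    exact FiniteField.pow_card x
  have hp2 : p ≠ 2 := by
    rintro rfl
    rw [hqpk] at hodd
    exact (Nat.not_odd_iff_even.mpr (Nat.even_pow.mpr ⟨even_two, hk.ne'⟩)) hodd
  have two_ne : (2 : F) ≠ 0 := by
    intro h
    have h1 : (p : ℕ) ∣ 2 := (CharP.cast_eq_zero_iff F p 2).mp (by exact_mod_cast h)
    exact hp2 ((Nat.prime_dvd_prime_iff_eq hp Nat.prime_two).mp h1)
  have L5 : ∀ c : F, c ^ (q + 1) = 1 → ∃ a : F, a ≠ 0 ∧ a ^ q * c = a :=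
    fun c hc => exists_split hq2 hF hc
  obtain ⟨ε, hε0, hεq⟩ : ∃ ε : F, ε ≠ 0 ∧ ε ^ q = -ε := by
    have hev : Even (q + 1) := by
      obtain ⟨m, hm⟩ := hodd; exact ⟨m + 1, by omega⟩
    obtain ⟨a, ha0, ha⟩ := L5 (-1) (Even.neg_one_pow hev)
    exact ⟨a, ha0, by linear_combination -ha⟩
  obtain ⟨j, hj⟩ : ∃ j, v j ≠ 0 := Function.ne_iff.mp hv
  set T : Fin 4 → F := ![v 3 ^ q, v 2 ^ q, v 1 ^ q, v 0 ^ q] with hTdef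
  have hT0 : T 0 = v 3 ^ q := rfl
  have hT1 : T 1 = v 2 ^ q := rfl
  have hT2 : T 2 = v 1 ^ q := rfl
  have hT3 : T 3 = v 0 ^ q := rfl
  constructor
  · rintro ⟨hQ, hH⟩
    have hQ' : v 0 * v 3 - v 1 * v 2 = 0 := hQ
    have hH' : v 0 ^ (q + 1) - v 1 ^ (q + 1) - v 2 ^ (q + 1) + v 3 ^ (q + 1) = 0 := hH
    by_cases hdep : ∃ c : F, T = c • v
    · -- Case A: v is a scalar multiple of a Σ-vector
      obtain ⟨c, hc⟩ := hdep
      have e0 : v 3 ^ q = c * v 0 := congrFun hc 0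
      have e1 : v 2 ^ q = c * v 1 := congrFun hc 1
      have e2 : v 1 ^ q = c * v 2 := congrFun hc 2
      have e3 : v 0 ^ q = c * v 3 := congrFun hc 3
      have hall : ∀ i, v i = c ^ q * c * v i := by
        intro i
        fin_cases i
        · calc v 0 = (v 0 ^ q) ^ q := (frr _).symm
            _ = (c * v 3) ^ q := by rw [e3]
            _ = c ^ q * (c * v 0) := by rw [mul_pow, e0]
            _ = c ^ q * c * v 0 := by ring
        · calc v 1 = (v 1 ^ q) ^ q := (frr _).symm
            _ = (c * v 2) ^ q := by rw [e2]
            _ = c ^ q * (c * v 1) := by rw [mul_pow, e1]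
            _ = c ^ q * c * v 1 := by ring
        · calc v 2 = (v 2 ^ q) ^ q := (frr _).symm
            _ = (c * v 1) ^ q := by rw [e1]
            _ = c ^ q * (c * v 2) := by rw [mul_pow, e2]
            _ = c ^ q * c * v 2 := by ring
        · calc v 3 = (v 3 ^ q) ^ q := (frr _).symm
            _ = (c * v 0) ^ q := by rw [e0]
            _ = c ^ q * (c * v 3) := by rw [mul_pow, e3]
            _ = c ^ q * c * v 3 := by ring
      have hc1 : c ^ (q + 1) = 1 := by
        have := hall j
        have h2 : (c ^ q * c - 1) * v j = 0 := by linear_combination -this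
        rcases mul_eq_zero.mp h2 with h3 | h3
        · rw [pow_succ]; linear_combination h3
        · exact absurd h3 hj
      obtain ⟨a, ha0, ha⟩ := L5 c hc1
      refine Or.inl ⟨a⁻¹, a • v, ⟨smul_ne_zero ha0 hv, a * v 0, a * v 1, ?_⟩, ?_, ?_⟩
      · funext i
        fin_cases i
        · rfl
        · rfl
        · show a * v 2 = (a * v 1) ^ q
          rw [mul_pow, e2]; linear_combination (-(v 2)) * ha
        · show a * v 3 = (a * v 0) ^ q
          rw [mul_pow, e3]; linear_combination (-(v 3)) * ha
      · show a * v 0 * (a * v 3) - a * v 1 * (a * v 2) = 0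
        linear_combination a ^ 2 * hQ'
      · rw [smul_smul, inv_mul_cancel₀ ha0, one_smul]
    · -- Case B: v lies on an extended generator
      have hvne : ∀ x : F, (∀ i, x * v i = 0) → x = 0 := by
        intro x hx
        rcases mul_eq_zero.mp (hx j) with h | h
        · exact h
        · exact absurd h hj
      -- the key computation
      have key : ∀ μ : F, Qf (fun i => μ * v i + μ ^ q * T i) = 0 := by
        intro μ
        have hQq : v 0 ^ q * v 3 ^ q - v 1 ^ q * v 2 ^ q = 0 := by
          have : (v 0 * v 3 - v 1 * v 2) ^ q = 0 := by rw [hQ', zero_pow hq0]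
          rw [fr_sub, mul_pow, mul_pow] at this
          exact this
        show (μ * v 0 + μ ^ q * T 0) * (μ * v 3 + μ ^ q * T 3)
            - (μ * v 1 + μ ^ q * T 1) * (μ * v 2 + μ ^ q * T 2) = 0
        rw [hT0, hT1, hT2, hT3]
        linear_combination μ ^ 2 * hQ' + (μ ^ q) ^ 2 * hQq + μ * μ ^ q * hH'
      set u : Fin 4 → F := v + T with hu
      set w : Fin 4 → F := ε • (v - T) with hw
      have hui : ∀ i, u i = v i + T i := fun i => rfl
      have hwi : ∀ i, w i = ε * (v i - T i) := fun i => rfl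
      have hune : u ≠ 0 := by
        intro h
        refine hdep ⟨-1, funext fun i => ?_⟩
        have := congrFun h i
        rw [hui, Pi.zero_apply] at this
        show T i = ((-1 : F) • v) i
        rw [Pi.smul_apply, smul_eq_mul]
        linear_combination this
      have hwne : w ≠ 0 := by
        intro h
        refine hdep ⟨1, funext fun i => ?_⟩
        have := congrFun h i
        rw [hwi, Pi.zero_apply] at this
        rcases mul_eq_zero.mp this with h1 | h1
        · exact absurd h1 hε0
        · show T i = ((1 : F) • v) i
          rw [Pi.smul_apply, smul_eq_mul]
          linear_combination -h1
      refine Or.inr ⟨u, w, ⟨hune, v 0 + v 3 ^ q, v 1 + v 2 ^ q, ?_⟩,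
        ⟨hwne, ε * (v 0 - v 3 ^ q), ε * (v 1 - v 2 ^ q), ?_⟩, ?_, ?_, ?_⟩
      · funext i
        fin_cases i
        · rfl
        · rfl
        · show v 2 + T 2 = (v 1 + v 2 ^ q) ^ q
          rw [hT2, fr_add, frr]; ring
        · show v 3 + T 3 = (v 0 + v 3 ^ q) ^ q
          rw [hT3, fr_add, frr]; ring
      · funext i
        fin_cases i
        · rfl
        · rfl
        · show ε * (v 2 - T 2) = (ε * (v 1 - v 2 ^ q)) ^ q
          rw [hT2, mul_pow, fr_sub, frr, hεq]; ring
        · show ε * (v 3 - T 3) = (ε * (v 0 - v 3 ^ q)) ^ q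
          rw [hT3, mul_pow, fr_sub, frr, hεq]; ring
      · rw [LinearIndependent.pair_iff]
        intro s t hst
        have hcomp : ∀ i, (s + t * ε) * v i + (s - t * ε) * T i = 0 := by
          intro i
          have := congrFun hst i
          simp only [Pi.add_apply, Pi.smul_apply, Pi.zero_apply, smul_eq_mul, hui i, hwi i] at this
          linear_combination this
        have h2 : s - t * ε = 0 := by
          by_contra h2
          refine hdep ⟨-(s + t * ε) / (s - t * ε), funext fun i => ?_⟩
          show T i = ((-(s + t * ε) / (s - t * ε)) • v) i
          rw [Pi.smul_apply, smul_eq_mul]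
          field_simp
          linear_combination hcomp i
        have h1 : s + t * ε = 0 := by
          apply hvne
          intro i
          have := hcomp i
          rw [h2] at this
          linear_combination this
        have hs : s = 0 := by
          have : 2 * s = 0 := by linear_combination h1 + h2
          rcases mul_eq_zero.mp this with h | h
          · exact absurd h two_ne
          · exact h
        refine ⟨hs, ?_⟩
        have : t * ε = 0 := by rw [hs] at h1; linear_combination h1
        rcases mul_eq_zero.mp this with h | h
        · exact h
        · exact absurd h hε0
      · rw [Submodule.mem_span_pair]
        refine ⟨(2 : F)⁻¹, ((2 : F) * ε)⁻¹, funext fun i => ?_⟩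
        simp only [Pi.add_apply, Pi.smul_apply, smul_eq_mul, hui i, hwi i]
        field_simp
        ring
      · intro s t hs ht
        have hμq : (s + t * ε) ^ q = s - t * ε := by
          rw [fr_add, mul_pow, hs, ht, hεq]; ring
        have heq : (fun i => s * u i + t * w i) =
            fun i => (s + t * ε) * v i + (s + t * ε) ^ q * T i := by
          funext i
          rw [hμq, hui i, hwi i]; ring
        rw [heq]
        exact key (s + t * ε)
  · -- converse
    rintro (⟨a, r, ⟨hr0, A, B, rfl⟩, hQr, rfl⟩ |
      ⟨u, w, ⟨hu0, A, B, rfl⟩, ⟨hw0, C, D, rfl⟩, hli, hmem, hQst⟩)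
    · -- scalar multiple of Σ-vector on Q₀
      have hQr' : A * A ^ q - B * B ^ q = 0 := hQr
      have ha : ∀ (i : Fin 4) (x : F), (a • ![A, B, B ^ q, A ^ q]) i = a * (![A, B, B ^ q, A ^ q]) i :=
        fun i x => rfl
      constructor
      · show a * A * (a * A ^ q) - a * B * (a * B ^ q) = 0
        linear_combination a ^ 2 * hQr'
      · show (a * A) ^ (q + 1) - (a * B) ^ (q + 1) - (a * B ^ q) ^ (q + 1)
            + (a * A ^ q) ^ (q + 1) = 0
        simp only [pow_succ, mul_pow, frr]
        linear_combination (2 * a ^ q * a) * hQr'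
    · -- point on an extended generator
      obtain ⟨x, y, hxy⟩ := Submodule.mem_span_pair.mp hmem
      have hQu : A * A ^ q - B * B ^ q = 0 := by
        have := hQst 1 0 (one_pow q) (zero_pow hq0)
        simpa [Qf] using this
      have hQw : C * C ^ q - D * D ^ q = 0 := by
        have := hQst 0 1 (zero_pow hq0) (one_pow q)
        simpa [Qf] using this
      have hB' : (A + C) * (A ^ q + C ^ q) - (B + D) * (B ^ q + D ^ q) = 0 := by
        have := hQst 1 1 (one_pow q) (one_pow q)
        simpa [Qf] using this
      have hv0 : v 0 = x * A + y * C := by rw [← hxy]; rfl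
      have hv1 : v 1 = x * B + y * D := by rw [← hxy]; rfl
      have hv2 : v 2 = x * B ^ q + y * D ^ q := by rw [← hxy]; rfl
      have hv3 : v 3 = x * A ^ q + y * C ^ q := by rw [← hxy]; rfl
      have hv0q : (x * A + y * C) ^ q = x ^ q * A ^ q + y ^ q * C ^ q := by
        rw [fr_add, mul_pow, mul_pow]
      have hv1q : (x * B + y * D) ^ q = x ^ q * B ^ q + y ^ q * D ^ q := by
        rw [fr_add, mul_pow, mul_pow]
      have hv2q : (x * B ^ q + y * D ^ q) ^ q = x ^ q * B + y ^ q * D := by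
        rw [fr_add, mul_pow, mul_pow, frr, frr]
      have hv3q : (x * A ^ q + y * C ^ q) ^ q = x ^ q * A + y ^ q * C := by
        rw [fr_add, mul_pow, mul_pow, frr, frr]
      constructor
      · show v 0 * v 3 - v 1 * v 2 = 0
        rw [hv0, hv1, hv2, hv3]
        linear_combination (x ^ 2 - x * y) * hQu + (y ^ 2 - x * y) * hQw + x * y * hB'
      · show v 0 ^ (q + 1) - v 1 ^ (q + 1) - v 2 ^ (q + 1) + v 3 ^ (q + 1) = 0
        rw [hv0, hv1, hv2, hv3]
        simp only [pow_succ]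
        rw [hv0q, hv1q, hv2q, hv3q]
        linear_combination (2 * x * x ^ q - x * y ^ q - x ^ q * y) * hQu
          + (2 * y * y ^ q - x * y ^ q - x ^ q * y) * hQw
          + (x * y ^ q + x ^ q * y) * hB'
end

section
/- Let v ∈ F⁴ be nonzero and suppose v is not an F-scalar multiple of any Σ-vector. Then v is nonsingular if and only if there exist two F-linearly independent Σ-vectors u, w with v ∈ span_F{u, w} such that Q(su + tw) ≠ 0 for all (s,t) ∈ 𝔽_q² \ {(0,0)} (i.e., v lies on an extended subline of Σ external to Q₀). -/
/-! ## Auxiliary machinery -/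

/-- The Baer involution on vectors: `σ(α,β,γ,δ) = (δ^q, γ^q, β^q, α^q)`. -/
def sv (q : ℕ) {F : Type*} [Field F] (v : Fin 4 → F) : Fin 4 → F :=
  ![v 3 ^ q, v 2 ^ q, v 1 ^ q, v 0 ^ q]

section aux

variable {q : ℕ} {F : Type*} [Field F] [Fintype F]

omit [Fintype F] in
@[simp] lemma sv0 (v : Fin 4 → F) : sv q v 0 = v 3 ^ q := rfl
omit [Fintype F] in
@[simp] lemma sv1 (v : Fin 4 → F) : sv q v 1 = v 2 ^ q := rfl
omit [Fintype F] in
@[simp] lemma sv2 (v : Fin 4 → F) : sv q v 2 = v 1 ^ q := rfl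
omit [Fintype F] in
@[simp] lemma sv3 (v : Fin 4 → F) : sv q v 3 = v 0 ^ q := rfl

lemma frob2 (hF : Fintype.card F = q ^ 2) (x : F) : (x ^ q) ^ q = x := by
  rw [← pow_mul, ← sq, ← hF, FiniteField.pow_card]

lemma addq (hq : ∃ p k : ℕ, p.Prime ∧ 0 < k ∧ q = p ^ k) (hF : Fintype.card F = q ^ 2)
    (x y : F) : (x + y) ^ q = x ^ q + y ^ q := by
  obtain ⟨p, k, hp, hk, rfl⟩ := hq
  haveI : Fact p.Prime := ⟨hp⟩
  obtain ⟨n, hrp, hcard⟩ := FiniteField.card F (ringChar F)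
  have hcard2 : ringChar F ^ (n : ℕ) = p ^ (k * 2) := by
    rw [← hcard, hF, ← pow_mul]
  have hdvd : ringChar F ∣ p ^ (k * 2) := by
    rw [← hcard2]; exact dvd_pow_self _ n.ne_zero
  have hrpeq : ringChar F = p :=
    (Nat.prime_dvd_prime_iff_eq hrp hp).mp (hrp.dvd_of_dvd_pow hdvd)
  haveI : CharP F p := hrpeq ▸ ringChar.charP F
  exact add_pow_char_pow x y p k

omit [Fintype F] in
lemma sv_sv (hfr : ∀ x : F, (x ^ q) ^ q = x) (v : Fin 4 → F) : sv q (sv q v) = v := by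
  funext i; fin_cases i <;> simp [sv, hfr]

omit [Fintype F] in
lemma sv_eq_zero (hq0 : q ≠ 0) (hfr : ∀ x : F, (x ^ q) ^ q = x) {v : Fin 4 → F}
    (h : sv q v = 0) : v = 0 := by
  have h2 : sv q (sv q v) = sv q 0 := by rw [h]
  rw [sv_sv hfr] at h2
  rw [h2]
  funext i; fin_cases i <;> simp [sv, zero_pow hq0]

omit [Fintype F] in
lemma fixed_isSigma {r : Fin 4 → F} (h0 : r ≠ 0) (hfix : sv q r = r) : IsSigmaVec q r := by
  refine ⟨h0, r 0, r 1, ?_⟩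
  have h2 := congrFun hfix 2
  have h3 := congrFun hfix 3
  simp only [sv2, sv3] at h2 h3
  funext i; fin_cases i <;> simp [h2, h3]

omit [Fintype F] in
lemma sv_lin (hadd : ∀ x y : F, (x + y) ^ q = x ^ q + y ^ q) (a b : F) (u w : Fin 4 → F) :
    sv q (a • u + b • w) = a ^ q • sv q u + b ^ q • sv q w := by
  funext i
  fin_cases i <;>
    simp [sv, hadd, mul_pow, Pi.add_apply, Pi.smul_apply, smul_eq_mul]

omit [Fintype F] in
/-- Σ-vectors are fixed by the Baer involution. -/
lemma isSigma_fixed (hfr : ∀ x : F, (x ^ q) ^ q = x) {r : Fin 4 → F}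
    (hr : IsSigmaVec q r) : sv q r = r := by
  obtain ⟨-, α, β, rfl⟩ := hr
  funext i; fin_cases i <;> simp [sv, hfr]

lemma exists_qsub1_root (hF : Fintype.card F = q ^ 2) (hq2 : 2 ≤ q)
    (u : F) (hu : u ≠ 0) (h1 : u ^ (q + 1) = 1) : ∃ x : F, x ≠ 0 ∧ x ^ (q - 1) = u := by
  obtain ⟨ζ, hζ⟩ := IsCyclic.exists_generator (α := Fˣ)
  have hord : orderOf ζ = q ^ 2 - 1 := by
    rw [orderOf_eq_card_of_forall_mem_zpowers hζ, Nat.card_units,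
      Nat.card_eq_fintype_card, hF]
  set U : Fˣ := Units.mk0 u hu with hU
  have hUv : (U : F) = u := rfl
  obtain ⟨m, hm⟩ := Subgroup.mem_zpowers_iff.mp (hζ U)
  have hU1 : U ^ (q + 1) = 1 := by
    ext; push_cast [hUv]; exact h1
  have hz1 : ζ ^ (m * (q + 1)) = 1 := by
    rw [zpow_mul, hm]; exact_mod_cast hU1
  have hdv : ((q ^ 2 - 1 : ℕ) : ℤ) ∣ m * (q + 1) := by
    rw [← hord]; exact orderOf_dvd_iff_zpow_eq_one.mpr hz1
  have hfact : ((q ^ 2 - 1 : ℕ) : ℤ) = ((q : ℤ) - 1) * ((q : ℤ) + 1) := by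
    have h2 : (q : ℤ) ^ 2 - 1 = ((q : ℤ) - 1) * ((q : ℤ) + 1) := by ring
    rw [← h2]
    have h1q : 1 ≤ q ^ 2 := Nat.one_le_pow _ _ (by omega)
    push_cast [Nat.cast_sub h1q]; ring
  have hdm : ((q : ℤ) - 1) ∣ m := by
    rw [hfact] at hdv
    have hq1 : ((q : ℤ) + 1) ≠ 0 := by positivity
    exact (mul_dvd_mul_iff_right hq1).mp hdv
  obtain ⟨n, hn⟩ := hdm
  refine ⟨((ζ ^ n : Fˣ) : F), Units.ne_zero _, ?_⟩
  have key : (ζ ^ n) ^ (q - 1) = U := by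
    rw [← zpow_natCast (ζ ^ n) (q - 1), ← zpow_mul]
    have h3 : n * ((q - 1 : ℕ) : ℤ) = m := by
      rw [Nat.cast_sub (by omega), hn]; ring
    rw [h3, hm]
  rw [← Units.val_pow_eq_pow_val, key, hUv]

lemma lemN (hF : Fintype.card F = q ^ 2) (hq2 : 2 ≤ q) (hodd : Odd q)
    (hfr : ∀ x : F, (x ^ q) ^ q = x) (a b : F) :
    (∀ x : F, x ≠ 0 → a * x + b * x ^ q ≠ 0) ↔ a ^ (q + 1) ≠ b ^ (q + 1) := by
  have heven : Even (q + 1) := hodd.add_one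
  constructor
  · intro h heq
    by_cases hb : b = 0
    · have ha : a = 0 := by
        have : a ^ (q + 1) = 0 := by rw [heq, hb, zero_pow (by omega)]
        exact pow_eq_zero_iff (by omega) |>.mp this
      exact h 1 one_ne_zero (by rw [ha, hb]; ring)
    · have ha : a ≠ 0 := by
        intro h0
        apply hb
        have : b ^ (q + 1) = 0 := by rw [← heq, h0, zero_pow (by omega)]
        exact pow_eq_zero_iff (by omega) |>.mp this
      have hu0 : -a / b ≠ 0 := by
        simp only [neg_div, neg_ne_zero]
        exact div_ne_zero ha hb
      have hu1 : (-a / b) ^ (q + 1) = 1 := by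
        rw [div_pow, heven.neg_pow, heq, div_self (pow_ne_zero _ hb)]
      obtain ⟨x, hx0, hx⟩ := exists_qsub1_root hF hq2 _ hu0 hu1
      apply h x hx0
      have hxq : x ^ q = x ^ (q - 1) * x := by
        rw [← pow_succ, Nat.sub_add_cancel (by omega)]
      rw [hxq, hx]
      field_simp
      ring
  · intro hne x hx h0
    apply hne
    have h1 : a * x = -(b * x ^ q) := eq_neg_of_add_eq_zero_left h0
    have h2 : (x ^ q) ^ (q + 1) = x ^ (q + 1) := by
      rw [pow_succ, hfr, pow_succ, mul_comm]
    have h3 : a ^ (q + 1) * x ^ (q + 1) = b ^ (q + 1) * x ^ (q + 1) := by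
      calc a ^ (q + 1) * x ^ (q + 1) = (a * x) ^ (q + 1) := (mul_pow _ _ _).symm
        _ = (b * x ^ q) ^ (q + 1) := by rw [h1, heven.neg_pow]
        _ = b ^ (q + 1) * x ^ (q + 1) := by rw [mul_pow, h2]
    exact mul_right_cancel₀ (pow_ne_zero _ hx) h3

omit [Fintype F] in
lemma keyId (hadd : ∀ x y : F, (x + y) ^ q = x ^ q + y ^ q)
    (hfr : ∀ x : F, (x ^ q) ^ q = x) (v : Fin 4 → F) (c : F) :
    (v 0 * c + v 3 ^ q * c ^ q) ^ (q + 1) - (v 2 * c + v 1 ^ q * c ^ q) ^ (q + 1)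
      = Qf (fun i => c * v i + c ^ q * sv q v i) := by
  have e1 : (v 0 * c + v 3 ^ q * c ^ q) ^ q = v 0 ^ q * c ^ q + v 3 * c := by
    rw [hadd, mul_pow, mul_pow, hfr, hfr]
  have e2 : (v 2 * c + v 1 ^ q * c ^ q) ^ q = v 2 ^ q * c ^ q + v 1 * c := by
    rw [hadd, mul_pow, mul_pow, hfr, hfr]
  simp only [Qf, sv, Matrix.cons_val_zero, Matrix.cons_val_one, Matrix.head_cons,
    Matrix.cons_val_two, Matrix.tail_cons, Matrix.cons_val_three]
  rw [pow_succ, pow_succ, e1, e2]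
  ring

/-- Nonsingularity is equivalent to the external-subline condition along `c ↦ c·v + c^q·σv`. -/
lemma nonsing_iff (hF : Fintype.card F = q ^ 2) (hq2 : 2 ≤ q) (hodd : Odd q)
    (hadd : ∀ x y : F, (x + y) ^ q = x ^ q + y ^ q)
    (hfr : ∀ x : F, (x ^ q) ^ q = x) (v : Fin 4 → F) :
    Nonsingular q v ↔
      ∀ c : F, c ≠ 0 → Qf (fun i => c * v i + c ^ q * sv q v i) ≠ 0 := by
  constructor
  · intro h c hc
    rw [← keyId hadd hfr v c]
    exact sub_ne_zero.mpr ((lemN hF hq2 hodd hfr _ _).mp (fun x hx => h x c hx hc))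
  · intro h x z hx hz
    refine (lemN hF hq2 hodd hfr _ _).mpr ?_ x hx
    refine sub_ne_zero.mp ?_
    rw [keyId hadd hfr v z]
    exact h z hz

/-- If `v` is not a multiple of a Σ-vector then `v` is not a multiple of `sv q v`. -/
lemma not_mult (hF : Fintype.card F = q ^ 2) (hq2 : 2 ≤ q)
    (hfr : ∀ x : F, (x ^ q) ^ q = x) {v : Fin 4 → F} (hv : v ≠ 0)
    (hns : ¬∃ (a : F) (r : Fin 4 → F), IsSigmaVec q r ∧ v = a • r) :
    ∀ lam : F, v ≠ lam • sv q v := by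
  intro lam hlam
  have hlam0 : lam ≠ 0 := by
    rintro rfl; rw [zero_smul] at hlam; exact hv hlam
  have hsvv : sv q v = lam⁻¹ • v := by
    conv_rhs => rw [hlam]
    rw [smul_smul, inv_mul_cancel₀ hlam0, one_smul]
  have hsv2 : sv q v = lam ^ q • v := by
    calc sv q v = sv q (lam • sv q v) := congrArg (sv q) hlam
      _ = lam ^ q • v := by
          funext i; fin_cases i <;>
            simp [sv, mul_pow, hfr, Pi.smul_apply, smul_eq_mul]
  have hnorm : lam ^ (q + 1) = 1 := by
    have h1 : v = (lam ^ (q + 1)) • v := by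
      rw [pow_succ, mul_comm, mul_smul]
      calc v = lam • sv q v := hlam
        _ = lam • lam ^ q • v := by rw [← hsv2]
    obtain ⟨i, hi⟩ := Function.ne_iff.mp hv
    have h2 := congrFun h1 i
    simp only [Pi.smul_apply, smul_eq_mul, Pi.zero_apply] at h2 hi
    have h3 : (lam ^ (q + 1) - 1) * v i = 0 := by linear_combination -h2
    rcases mul_eq_zero.mp h3 with h | h
    · exact sub_eq_zero.mp h
    · exact absurd h hi
  obtain ⟨μ, hμ0, hμ⟩ := exists_qsub1_root hF hq2 lam hlam0 hnorm
  apply hns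
  refine ⟨μ⁻¹, μ • v, fixed_isSigma (smul_ne_zero hμ0 hv) ?_, ?_⟩
  · have e1 : sv q (μ • v) = μ ^ q • sv q v := by
      funext i; fin_cases i <;>
        simp [sv, mul_pow, Pi.smul_apply, smul_eq_mul]
    rw [e1, hsvv, smul_smul]
    have h5 : μ ^ q * lam⁻¹ = μ := by
      have hq1 : μ ^ q = μ ^ (q - 1) * μ := by
        rw [← pow_succ, Nat.sub_add_cancel (by omega)]
      rw [hq1, hμ]
      field_simp
    rw [h5]
  · rw [smul_smul, inv_mul_cancel₀ hμ0, one_smul]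

end aux

/-- A point not in the Baer subgeometry is nonsingular iff it lies on an extended
subline of `Σ` external to `Q₀`. -/
theorem stmt10 (q : ℕ) (hq : ∃ p k : ℕ, p.Prime ∧ 0 < k ∧ q = p ^ k) (hodd : Odd q)
    (F : Type*) [Field F] [Fintype F] (hF : Fintype.card F = q ^ 2)
    (v : Fin 4 → F) (hv : v ≠ 0)
    (hns : ¬∃ (a : F) (r : Fin 4 → F), IsSigmaVec q r ∧ v = a • r) :
    Nonsingular q v ↔
      ∃ u w : Fin 4 → F, IsSigmaVec q u ∧ IsSigmaVec q w ∧
        LinearIndependent F ![u, w] ∧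
        v ∈ Submodule.span F {u, w} ∧
        ∀ s t : F, s ^ q = s → t ^ q = t → (s, t) ≠ (0, 0) →
          Qf (fun i => s * u i + t * w i) ≠ 0 := by
  have hq2 : 2 ≤ q := by
    obtain ⟨p, k, hp, hk, rfl⟩ := hq
    calc 2 ≤ p := hp.two_le
      _ = p ^ 1 := (pow_one p).symm
      _ ≤ p ^ k := Nat.pow_le_pow_right hp.pos hk
  have hadd : ∀ x y : F, (x + y) ^ q = x ^ q + y ^ q := addq hq hF
  have hfr : ∀ x : F, (x ^ q) ^ q = x := frob2 hF
  have hnm := not_mult hF hq2 hfr hv hns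
  -- linear independence of v and sv q v
  have hind0 : ∀ a b : F, a • v + b • sv q v = 0 → a = 0 ∧ b = 0 := by
    intro a b hab
    by_cases ha : a = 0
    · subst ha
      rw [zero_smul, zero_add] at hab
      rcases smul_eq_zero.mp hab with hb | hsv
      · exact ⟨rfl, hb⟩
      · exact absurd (sv_eq_zero (by omega) hfr hsv) hv
    · exfalso
      have h1 : a • v = -(b • sv q v) := eq_neg_of_add_eq_zero_left hab
      have h2 : v = (a⁻¹ * -b) • sv q v := by
        rw [mul_smul, neg_smul, ← h1, smul_smul, inv_mul_cancel₀ ha, one_smul]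
      exact hnm _ h2
  -- the combination map is nonzero for c ≠ 0, and yields Σ-vectors
  have hgne : ∀ c : F, c ≠ 0 → (fun i => c * v i + c ^ q * sv q v i) ≠ (0 : Fin 4 → F) := by
    intro c hc h0
    apply hnm (-(c ^ q) * c⁻¹)
    funext i
    have h1 := congrFun h0 i
    simp only [Pi.zero_apply] at h1
    have hc' : c⁻¹ * c = 1 := inv_mul_cancel₀ hc
    have h2 : v i = -(c ^ q) * c⁻¹ * sv q v i := by
      linear_combination c⁻¹ * h1 - (v i) * hc'
    simpa [Pi.smul_apply, smul_eq_mul] using h2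
  have hfix : ∀ c : F, sv q (fun i => c * v i + c ^ q * sv q v i)
      = fun i => c * v i + c ^ q * sv q v i := by
    intro c
    funext i
    fin_cases i <;> (simp [sv, hadd, mul_pow, hfr]; ring)
  have hsig : ∀ c : F, c ≠ 0 → IsSigmaVec q (fun i => c * v i + c ^ q * sv q v i) :=
    fun c hc => fixed_isSigma (hgne c hc) (hfix c)
  constructor
  · -- forward direction
    intro hNS
    have hQne := (nonsing_iff hF hq2 hodd hadd hfr v).mp hNS
    obtain ⟨ζ, hζ⟩ := IsCyclic.exists_generator (α := Fˣ)
    set ξ : F := (ζ : F) with hxi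
    have hξ : ξ ^ q ≠ ξ := by
      intro h
      have h1 : ζ ^ q = ζ := Units.ext (by push_cast; exact h)
      have h2 : ζ ^ (q - 1) * ζ = 1 * ζ := by
        rw [← pow_succ, Nat.sub_add_cancel (by omega), h1, one_mul]
      have hζq : ζ ^ (q - 1) = 1 := mul_right_cancel h2
      have hdvd := orderOf_dvd_of_pow_eq_one hζq
      rw [orderOf_eq_card_of_forall_mem_zpowers hζ, Nat.card_units,
        Nat.card_eq_fintype_card, hF] at hdvd
      have hle : q ^ 2 - 1 ≤ q - 1 := Nat.le_of_dvd (by omega) hdvd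
      have hlt : q < q ^ 2 := by nlinarith
      omega
    have hξ0 : ξ ≠ 0 := Units.ne_zero ζ
    have hd : ξ - ξ ^ q ≠ 0 := sub_ne_zero.mpr (Ne.symm hξ)
    refine ⟨fun i => 1 * v i + 1 ^ q * sv q v i, fun i => ξ * v i + ξ ^ q * sv q v i,
      hsig 1 one_ne_zero, hsig ξ hξ0, ?_, ?_, ?_⟩
    · rw [LinearIndependent.pair_iff]
      intro s t hst
      have hcoef : (s + t * ξ) • v + (s + t * ξ ^ q) • sv q v = 0 := by
        funext i
        have h0 := congrFun hst i
        simp only [Pi.add_apply, Pi.smul_apply, smul_eq_mul, Pi.zero_apply,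
          one_pow, one_mul] at h0 ⊢
        linear_combination h0
      obtain ⟨h1, h2⟩ := hind0 _ _ hcoef
      have ht : t = 0 := by
        have h3 : t * (ξ - ξ ^ q) = 0 := by linear_combination h1 - h2
        rcases mul_eq_zero.mp h3 with h | h
        · exact h
        · exact absurd h hd
      subst ht
      constructor
      · linear_combination h1
      · rfl
    · rw [Submodule.mem_span_pair]
      refine ⟨-(ξ ^ q) * (ξ - ξ ^ q)⁻¹, (ξ - ξ ^ q)⁻¹, ?_⟩
      funext i
      simp only [Pi.add_apply, Pi.smul_apply, smul_eq_mul, one_pow, one_mul]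
      field_simp
      ring
    · intro s t hs ht hst
      have hc : s + t * ξ ≠ 0 := by
        intro h0
        by_cases ht0 : t = 0
        · subst ht0
          have hs0 : s = 0 := by linear_combination h0
          exact hst (by rw [hs0])
        · apply hξ
          have hξval : ξ = -(s * t⁻¹) := by
            field_simp
            linear_combination h0
          rw [hξval, hodd.neg_pow, mul_pow, inv_pow, hs, ht]
      have hcq : (s + t * ξ) ^ q = s + t * ξ ^ q := by
        rw [hadd, mul_pow, hs, ht]
      have he : (fun i => s * (1 * v i + 1 ^ q * sv q v i) + t * (ξ * v i + ξ ^ q * sv q v i))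
          = fun i => (s + t * ξ) * v i + (s + t * ξ) ^ q * sv q v i := by
        funext i
        rw [hcq]
        ring
      rw [he]
      exact hQne _ hc
  · -- backward direction
    rintro ⟨u, w, hu, hw, hind, hspan, hext⟩
    rw [nonsing_iff hF hq2 hodd hadd hfr v]
    intro c hc
    obtain ⟨a, b, hab⟩ := Submodule.mem_span_pair.mp hspan
    have hsu : sv q u = u := isSigma_fixed hfr hu
    have hsw : sv q w = w := isSigma_fixed hfr hw
    have ha : a ≠ 0 := by
      rintro rfl
      exact hns ⟨b, w, hw, by rw [← hab, zero_smul, zero_add]⟩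
    have hb : b ≠ 0 := by
      rintro rfl
      exact hns ⟨a, u, hu, by rw [← hab, zero_smul, add_zero]⟩
    have hvi : ∀ i, v i = a * u i + b * w i := by
      intro i
      rw [← hab]
      simp [Pi.add_apply, Pi.smul_apply, smul_eq_mul]
    have hsvv : sv q v = a ^ q • u + b ^ q • w := by
      rw [← hab, sv_lin hadd, hsu, hsw]
    have hsvi : ∀ i, sv q v i = a ^ q * u i + b ^ q * w i := by
      intro i
      rw [hsvv]
      simp [Pi.add_apply, Pi.smul_apply, smul_eq_mul]
    have hs : (c * a + (c * a) ^ q) ^ q = c * a + (c * a) ^ q := by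
      rw [hadd, hfr]; ring
    have ht : (c * b + (c * b) ^ q) ^ q = c * b + (c * b) ^ q := by
      rw [hadd, hfr]; ring
    have hQeq : (fun i => c * v i + c ^ q * sv q v i)
        = fun i => (c * a + (c * a) ^ q) * u i + (c * b + (c * b) ^ q) * w i := by
      funext i
      rw [hvi i, hsvi i, mul_pow, mul_pow]
      ring
    rw [hQeq]
    refine hext _ _ hs ht ?_
    intro hst00
    rw [Prod.mk.injEq] at hst00
    obtain ⟨hs0, ht0⟩ := hst00
    have e1 : c ^ q * a ^ q = -(c * a) := by
      have := eq_neg_of_add_eq_zero_right hs0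
      rw [← mul_pow]; exact this
    have e2 : c ^ q * b ^ q = -(c * b) := by
      have := eq_neg_of_add_eq_zero_right ht0
      rw [← mul_pow]; exact this
    have hcq0 : c ^ q ≠ 0 := pow_ne_zero _ hc
    have e3 : a ^ q * b = b ^ q * a := by
      have h4 : c ^ q * (a ^ q * b) = c ^ q * (b ^ q * a) := by
        linear_combination b * e1 - a * e2
      exact mul_left_cancel₀ hcq0 h4
    have hr : (b * a⁻¹) ^ q = b * a⁻¹ := by
      rw [mul_pow, inv_pow]
      have haq : a ^ q ≠ 0 := pow_ne_zero _ ha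
      field_simp
      linear_combination -e3
    set r' : Fin 4 → F := (1 : F) • u + (b * a⁻¹) • w with hr'
    have hfix' : sv q r' = r' := by
      rw [hr', sv_lin hadd, hsu, hsw, one_pow, hr]
    have hr'0 : r' ≠ 0 := by
      intro h0
      have := (LinearIndependent.pair_iff.mp hind 1 (b * a⁻¹)) h0
      exact one_ne_zero this.1
    refine hns ⟨a, r', fixed_isSigma hr'0 hfix', ?_⟩
    rw [← hab, hr', smul_add, smul_smul, smul_smul, mul_one]
    have h6 : a * (b * a⁻¹) = b := by field_simp
    rw [h6]
end
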